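/- arXiv:1411.4193 — 4 statements merged into one kernel-verified Lean document; each statement's English description precedes it below -/
import Mathlib

section
/- Let T > 0, s₀ > 0, strikes 0 < K₁ < … < Kₙ with given prices c(K₁),…,c(Kₙ), and barriers s₀ < B₁ < … < B_m with given prices b(B₁),…,b(B_m) ∈ [0,1]. Suppose a market model exists for these data. Then: (1) there exists a probability measure μ on (0,∞) with mean s₀ whose call function c_μ satisfies c_μ(K_i) = c(K_i) for all i = 1,…,n; and (2) there exist functions 𝔠^{B₁},…,𝔠^{B_m} from [0,∞) to [0,s₀] such that, setting 𝔠^{B_{m+1}} := c_μ, for every j = 1,…,m: (a) 𝔠^{B_j} is convex; (b) 0 ≤ 𝔠^{B₁} ≤ … ≤ 𝔠^{B_m} ≤ 𝔠^{B_{m+1}} pointwise; (c) the right derivative of 𝔠^{B_j} at 0 equals −1, 𝔠^{B_j}(0) = s₀, and 𝔠^{B_j}(x) = 0 for all x ≥ B_j; (d) the left derivative of 𝔠^{B_j} at B_j equals −b(B_j); (e) the function x ↦ 𝔠^{B_{j+1}}(x) − 𝔠^{B_j}(x) + b(B_j)·(B_j − x)⁺ is convex on [0,∞). -/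
open MeasureTheory Set Filter

noncomputable section

/-- The running maximum `M_T(ω) = sup_{t ∈ [0,T]} S_t(ω)`. -/
def runMax {Ω : Type} (S : ℝ → Ω → ℝ) (T : ℝ) (ω : Ω) : ℝ :=
  ⨆ t : Icc (0:ℝ) T, S t ω

/-- The stopped value `S_{T ∧ H_B}(ω)`, where `H_B` is the first hitting time of
`[B, ∞)` by `S` during the time interval `[0,T]` (`= S_T(ω)` if `B` is not reached). -/
def stopVal {Ω : Type} (S : ℝ → Ω → ℝ) (B T : ℝ) (ω : Ω) : ℝ :=
  S (hittingBtwn S (Ici B) 0 T ω) ω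

/-- The event `{H_B ≤ T}`: the level `B` is reached by `S` during `[0,T]`. -/
def hitEvent {Ω : Type} (S : ℝ → Ω → ℝ) (B T : ℝ) : Set Ω :=
  {ω | ∃ t ∈ Icc (0:ℝ) T, B ≤ S t ω}

/-- `S` is an adapted martingale on the time interval `[0,T]` with continuous sample
paths, a.s. (strictly) positive values, and initial value `s₀`. -/
structure IsPosContMart {Ω : Type} [mΩ : MeasurableSpace Ω]
    (ℙ : Measure Ω) (ℱ : Filtration ℝ mΩ) (S : ℝ → Ω → ℝ) (s₀ T : ℝ) : Prop where
  adapted : ∀ t ∈ Icc (0:ℝ) T, StronglyMeasurable[ℱ t] (S t)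
  integrable : ∀ t ∈ Icc (0:ℝ) T, Integrable (S t) ℙ
  mart : ∀ s t : ℝ, s ∈ Icc (0:ℝ) T → t ∈ Icc (0:ℝ) T → s ≤ t →
    ℙ[S t|ℱ s] =ᵐ[ℙ] S s
  contPaths : ∀ ω, ContinuousOn (fun t => S t ω) (Icc (0:ℝ) T)
  pos : ∀ t ∈ Icc (0:ℝ) T, ∀ᵐ ω ∂ℙ, 0 < S t ω
  init : ∀ᵐ ω ∂ℙ, S 0 ω = s₀

/-- A market model for maturity `T`, initial price `s₀`, call prices `c i` at strikes `K i`
(`i = 1,…,n`) and barrier prices `b j` at barriers `B j` (`j = 1,…,m`). -/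
def IsMarketModel (Ω : Type) [mΩ : MeasurableSpace Ω] (ℙ : Measure Ω)
    (ℱ : Filtration ℝ mΩ) (S : ℝ → Ω → ℝ) (s₀ T : ℝ)
    (n m : ℕ) (K c B b : ℕ → ℝ) : Prop :=
  IsProbabilityMeasure ℙ ∧
  IsPosContMart ℙ ℱ S s₀ T ∧
  (∀ i, 1 ≤ i → i ≤ n → (∫ ω, max (S T ω - K i) 0 ∂ℙ) = c i) ∧
  (∀ j, 1 ≤ j → j ≤ m → (ℙ {ω | B j ≤ runMax S T ω}).toReal = b j)

open Topology

/-!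
The measure `μ` is the law of `S_T`. For a barrier `B > s₀` let `A_B` be the event that `S`
reaches `B` by time `T`; optional stopping at the hitting time of `B` gives the key identity
`E[S_T; A_B] = B ℙ(A_B)`. To prove it, sample `S` on dyadic grids: decomposing according to the
first grid time at which the samples reach `β` and using the martingale property there gives
`β ℙ ≤ E[S_T; ·] ≤ γ ℙ + (overshoot above γ)`, the overshoot disappears in the limit by uniform
continuity of the paths, and letting `β ↑ B` sandwiches `A_B`.

Then `𝔠^{B_j}(x) = E[(S_T - x)⁺; A_{B_j}ᶜ] + b_j (B_j - x)⁺` is the call function of the stopped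
price `S_{T ∧ H_{B_j}}`, and (a)–(e) are computations with this formula, the key identity
providing the values at `0` and the monotonicity in `j`.
-/

lemma setIntegral_sub_const {Ω : Type*} [MeasurableSpace Ω] {ℙ : Measure Ω} [IsFiniteMeasure ℙ]
    {f : Ω → ℝ} (hf : Integrable f ℙ) {E : Set Ω} (c : ℝ) :
    ∫ ω in E, (f ω - c) ∂ℙ = ∫ ω in E, f ω ∂ℙ - c * ℙ.real E := by
  rw [integral_sub hf.integrableOn (integrable_const c).integrableOn, setIntegral_const,
    smul_eq_mul, mul_comm]

section FirstHit

variable {Ω : Type*} {X : ℕ → Ω → ℝ} {β γ : ℝ} {N : ℕ}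

def firstHit (X : ℕ → Ω → ℝ) (β : ℝ) (i : ℕ) : Set Ω :=
  {ω | β ≤ X i ω ∧ ∀ l < i, X l ω < β}

def hitBy (X : ℕ → Ω → ℝ) (β : ℝ) (N : ℕ) : Set Ω :=
  {ω | ∃ i ≤ N, β ≤ X i ω}

def overshoot (X : ℕ → Ω → ℝ) (β γ : ℝ) (N : ℕ) : Set Ω :=
  ⋃ i ∈ Finset.range (N + 1), firstHit X β i ∩ {ω | γ ≤ X i ω}

lemma hitBy_eq_biUnion_firstHit :
    hitBy X β N = ⋃ i ∈ Finset.range (N + 1), firstHit X β i := by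
  classical
  ext ω
  simp only [hitBy, mem_iUnion, Finset.mem_range, exists_prop]
  constructor
  · rintro ⟨i, hi, hβ⟩
    have hex : ∃ i, β ≤ X i ω := ⟨i, hβ⟩
    exact ⟨Nat.find hex, (Nat.find_min' hex hβ).trans_lt (Nat.lt_succ_of_le hi),
      Nat.find_spec hex, fun l hl => not_le.1 (Nat.find_min hex hl)⟩
  · rintro ⟨i, hi, hβ, -⟩
    exact ⟨i, Nat.le_of_lt_succ hi, hβ⟩

lemma pairwise_disjoint_firstHit : Pairwise (Function.onFun Disjoint (firstHit X β)) := by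
  have key : ∀ i j, i < j → Disjoint (firstHit X β i) (firstHit X β j) :=
    fun i j hij => disjoint_left.2 fun ω hi hj => (hj.2 i hij).not_ge hi.1
  intro i j hij
  rcases hij.lt_or_gt with h | h
  exacts [key i j h, (key j i h).symm]

lemma notMem_overshoot {ω : Ω} (h0 : X 0 ω < β)
    (hstep : ∀ i < N, X (i + 1) ω < X i ω + (γ - β)) : ω ∉ overshoot X β γ N := by
  simp only [overshoot, mem_iUnion, Finset.mem_range, exists_prop, not_exists, not_and]
  rintro (_ | l) hl ⟨⟨hβ, hbefore⟩, hγ⟩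
  · exact h0.not_ge hβ
  · have := hstep l (by omega)
    have := hbefore l l.lt_succ_self
    exact (show X (l + 1) ω < γ by linarith).not_ge hγ

variable [mΩ : MeasurableSpace Ω] {𝒢 : Filtration ℕ mΩ}

lemma measurableSet_firstHit (hX : ∀ i ≤ N, StronglyMeasurable[𝒢 i] (X i)) {i : ℕ}
    (hi : i ≤ N) : MeasurableSet[𝒢 i] (firstHit X β i) := by
  have hmeas : ∀ l ≤ i, Measurable[𝒢 i] (X l) := fun l hl =>
    (hX l (hl.trans hi)).measurable.mono (𝒢.mono hl) le_rfl
  have heq : firstHit X β i = {ω | β ≤ X i ω} ∩ ⋂ l ∈ Finset.range i, {ω | X l ω < β} := by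
    ext; simp [firstHit]
  rw [heq]
  refine (measurableSet_le measurable_const (hmeas i le_rfl)).inter ?_
  exact Finset.measurableSet_biInter _ fun l hl =>
    measurableSet_lt (hmeas l (Finset.mem_range.1 hl).le) measurable_const

lemma measurableSet_hitBy (hX : ∀ i ≤ N, StronglyMeasurable[𝒢 i] (X i)) :
    MeasurableSet (hitBy X β N) := by
  rw [hitBy_eq_biUnion_firstHit]
  exact Finset.measurableSet_biUnion _ fun i hi =>
    𝒢.le i _ (measurableSet_firstHit hX (Finset.mem_range_succ_iff.1 hi))

lemma measurableSet_overshoot (hX : ∀ i ≤ N, StronglyMeasurable[𝒢 i] (X i)) :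
    MeasurableSet (overshoot X β γ N) :=
  Finset.measurableSet_biUnion _ fun i hi =>
    have hi : i ≤ N := Finset.mem_range_succ_iff.1 hi
    𝒢.le i _ ((measurableSet_firstHit hX hi).inter
      (measurableSet_le measurable_const (hX i hi).measurable))

variable {ℙ : Measure Ω} {Y : Ω → ℝ}

lemma setIntegral_hitBy_eq_sum (hX : ∀ i ≤ N, StronglyMeasurable[𝒢 i] (X i)) {f : Ω → ℝ}
    (hf : Integrable f ℙ) :
    ∫ ω in hitBy X β N, f ω ∂ℙ = ∑ i ∈ Finset.range (N + 1), ∫ ω in firstHit X β i, f ω ∂ℙ := by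
  rw [hitBy_eq_biUnion_firstHit]
  exact integral_biUnion_finset _
    (fun i hi => 𝒢.le i _ (measurableSet_firstHit hX (Finset.mem_range_succ_iff.1 hi)))
    ((pairwise_disjoint_firstHit (X := X) (β := β)).set_pairwise _) fun i _ => hf.integrableOn

lemma setIntegral_overshoot_eq_sum (hX : ∀ i ≤ N, StronglyMeasurable[𝒢 i] (X i)) {f : Ω → ℝ}
    (hf : Integrable f ℙ) :
    ∫ ω in overshoot X β γ N, f ω ∂ℙ
      = ∑ i ∈ Finset.range (N + 1), ∫ ω in firstHit X β i ∩ {ω | γ ≤ X i ω}, f ω ∂ℙ := by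
  refine integral_biUnion_finset _ (fun i hi => ?_)
    (((pairwise_disjoint_firstHit (X := X) (β := β)).mono
      fun _ _ h => h.mono inter_subset_left inter_subset_left).set_pairwise _)
    fun i _ => hf.integrableOn
  have hi : i ≤ N := Finset.mem_range_succ_iff.1 hi
  exact 𝒢.le i _ ((measurableSet_firstHit hX hi).inter
    (measurableSet_le measurable_const (hX i hi).measurable))

variable [IsFiniteMeasure ℙ]

lemma setIntegral_hitBy_sub_nonneg (hX : ∀ i ≤ N, StronglyMeasurable[𝒢 i] (X i))
    (hXint : ∀ i ≤ N, Integrable (X i) ℙ) (hY : Integrable Y ℙ)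
    (hclosed : ∀ i ≤ N, ∀ E, MeasurableSet[𝒢 i] E → ∫ ω in E, Y ω ∂ℙ = ∫ ω in E, X i ω ∂ℙ) :
    0 ≤ ∫ ω in hitBy X β N, (Y ω - β) ∂ℙ := by
  rw [setIntegral_hitBy_eq_sum hX (f := fun ω => Y ω - β) (hY.sub (integrable_const β))]
  refine Finset.sum_nonneg fun i hi => ?_
  have hi : i ≤ N := Finset.mem_range_succ_iff.1 hi
  have hF := measurableSet_firstHit (β := β) hX hi
  rw [setIntegral_sub_const hY, hclosed i hi _ hF, ← setIntegral_sub_const (hXint i hi)]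
  exact setIntegral_nonneg (𝒢.le i _ hF) fun ω hω => sub_nonneg.2 hω.1

lemma setIntegral_hitBy_sub_le (hX : ∀ i ≤ N, StronglyMeasurable[𝒢 i] (X i))
    (hXint : ∀ i ≤ N, Integrable (X i) ℙ) (hY : Integrable Y ℙ)
    (hclosed : ∀ i ≤ N, ∀ E, MeasurableSet[𝒢 i] E → ∫ ω in E, Y ω ∂ℙ = ∫ ω in E, X i ω ∂ℙ) :
    ∫ ω in hitBy X β N, (Y ω - γ) ∂ℙ ≤ ∫ ω in overshoot X β γ N, (Y ω - γ) ∂ℙ := by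
  have hYγ : Integrable (fun ω => Y ω - γ) ℙ := hY.sub (integrable_const γ)
  rw [setIntegral_hitBy_eq_sum hX hYγ, setIntegral_overshoot_eq_sum hX hYγ]
  refine Finset.sum_le_sum fun i hi => ?_
  have hi : i ≤ N := Finset.mem_range_succ_iff.1 hi
  have hF := measurableSet_firstHit (β := β) hX hi
  have hγ : MeasurableSet[𝒢 i] {ω | γ ≤ X i ω} :=
    measurableSet_le measurable_const (hX i hi).measurable
  have hshift : ∀ E, MeasurableSet[𝒢 i] E →
      ∫ ω in E, (Y ω - γ) ∂ℙ = ∫ ω in E, (X i ω - γ) ∂ℙ := fun E hE => by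
    rw [setIntegral_sub_const hY, setIntegral_sub_const (hXint i hi), hclosed i hi E hE]
  calc ∫ ω in firstHit X β i, (Y ω - γ) ∂ℙ
      = ∫ ω in firstHit X β i, (X i ω - γ) ∂ℙ := hshift _ hF
    _ ≤ ∫ ω in firstHit X β i ∩ {ω | γ ≤ X i ω}, (X i ω - γ) ∂ℙ := by
        rw [← integral_inter_add_sdiff (f := fun ω => X i ω - γ) (𝒢.le i _ hγ)
          ((hXint i hi).sub (integrable_const γ)).integrableOn]
        exact add_le_of_nonpos_right (setIntegral_nonpos ((𝒢.le i _ hF).diff (𝒢.le i _ hγ))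
          fun ω hω => sub_nonpos.2 (not_le.1 hω.2).le)
    _ = ∫ ω in firstHit X β i ∩ {ω | γ ≤ X i ω}, (Y ω - γ) ∂ℙ := (hshift _ (hF.inter hγ)).symm

end FirstHit

section Dyadic

variable {T : ℝ} {k i : ℕ}

def dyadicTime (T : ℝ) (k i : ℕ) : ℝ := i * T / 2 ^ k

@[simp] lemma dyadicTime_zero : dyadicTime T k 0 = 0 := by simp [dyadicTime]

lemma dyadicTime_two_mul : dyadicTime T (k + 1) (2 * i) = dyadicTime T k i := by
  simp only [dyadicTime]; push_cast; ring

lemma dyadicTime_succ : dyadicTime T k (i + 1) = dyadicTime T k i + T / 2 ^ k := by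
  simp only [dyadicTime]; push_cast; ring

lemma monotone_dyadicTime (hT : 0 ≤ T) (k : ℕ) : Monotone (dyadicTime T k) :=
  fun i j hij => by unfold dyadicTime; gcongr

lemma dyadicTime_mem_Icc (hT : 0 ≤ T) (hi : i ≤ 2 ^ k) : dyadicTime T k i ∈ Icc 0 T := by
  refine ⟨by unfold dyadicTime; positivity, ?_⟩
  rw [dyadicTime, div_le_iff₀ (by positivity), mul_comm T]
  exact mul_le_mul_of_nonneg_right (by exact_mod_cast hi) hT

lemma tendsto_div_two_pow (T : ℝ) : Tendsto (fun k : ℕ => T / 2 ^ k) atTop (𝓝 0) :=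
  tendsto_const_nhds.div_atTop (tendsto_pow_atTop_atTop_of_one_lt one_lt_two)

lemma exists_dyadicTime_le_lt (hT : 0 < T) {t : ℝ} (ht : t ∈ Icc 0 T) (k : ℕ) :
    ∃ i ≤ 2 ^ k, dyadicTime T k i ≤ t ∧ t < dyadicTime T k i + T / 2 ^ k := by
  set x := t * 2 ^ k / T
  have hx : 0 ≤ x := by have := ht.1; positivity
  have hxt : x * T / 2 ^ k = t := by simp only [x]; field_simp
  refine ⟨⌊x⌋₊, Nat.floor_le_of_le ?_, ?_, ?_⟩
  · push_cast
    rw [div_le_iff₀ hT, mul_comm]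
    exact mul_le_mul_of_nonneg_left ht.2 (by positivity)
  · rw [dyadicTime, ← hxt]
    gcongr
    exact Nat.floor_le hx
  · rw [← dyadicTime_succ, dyadicTime, ← hxt]
    gcongr
    exact_mod_cast Nat.lt_floor_add_one x

variable {Ω : Type*} [mΩ : MeasurableSpace Ω]

def dyadicFiltration (ℱ : Filtration ℝ mΩ) (hT : 0 ≤ T) (k : ℕ) : Filtration ℕ mΩ where
  seq i := ℱ (dyadicTime T k i)
  mono' _ _ hij := ℱ.mono (monotone_dyadicTime hT k hij)
  le' _ := ℱ.le _

end Dyadic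

section Paths

variable {Ω : Type} {S : ℝ → Ω → ℝ} {T β γ B : ℝ}

def dyadicHitEvent (S : ℝ → Ω → ℝ) (T β : ℝ) : Set Ω :=
  ⋃ k, hitBy (fun i => S (dyadicTime T k i)) β (2 ^ k)

lemma monotone_hitBy_dyadicTime :
    Monotone fun k => hitBy (fun i => S (dyadicTime T k i)) β (2 ^ k) :=
  monotone_nat_of_le_succ fun k _ ⟨i, hi, hβ⟩ =>
    ⟨2 * i, by rw [pow_succ]; omega, by simpa only [dyadicTime_two_mul] using hβ⟩

lemma dyadicHitEvent_subset_hitEvent (hT : 0 ≤ T) : dyadicHitEvent S T β ⊆ hitEvent S β T :=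
  iUnion_subset fun _ _ ⟨_, hi, hβ⟩ => ⟨_, dyadicTime_mem_Icc hT hi, hβ⟩

lemma dyadicHitEvent_anti {β' : ℝ} (h : β ≤ β') : dyadicHitEvent S T β' ⊆ dyadicHitEvent S T β :=
  iUnion_mono fun _ _ ⟨i, hi, hβ⟩ => ⟨i, hi, h.trans hβ⟩

lemma hitEvent_subset_dyadicHitEvent (hT : 0 < T)
    (hcont : ∀ ω, ContinuousOn (fun t => S t ω) (Icc 0 T)) (hβB : β < B) :
    hitEvent S B T ⊆ dyadicHitEvent S T β := by
  rintro ω ⟨t, ht, hB⟩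
  obtain ⟨δ, hδ, hball⟩ := Metric.mem_nhdsWithin_iff.1
    ((hcont ω t ht).eventually_const_lt (hβB.trans_le hB))
  obtain ⟨k, hk⟩ := ((tendsto_div_two_pow T).eventually (gt_mem_nhds hδ)).exists
  obtain ⟨i, hi, hle, hlt⟩ := exists_dyadicTime_le_lt hT ht k
  refine mem_iUnion.2 ⟨k, i, hi, (hball ⟨?_, dyadicTime_mem_Icc hT.le hi⟩).le⟩
  rw [Metric.mem_ball, Real.dist_eq, abs_sub_lt_iff]
  constructor <;> linarith

lemma iInter_hitEvent (hcont : ∀ ω, ContinuousOn (fun t => S t ω) (Icc 0 T)) {u : ℕ → ℝ}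
    (hu : Tendsto u atTop (𝓝 B)) (huB : ∀ n, u n ≤ B) :
    ⋂ n, hitEvent S (u n) T = hitEvent S B T := by
  refine Subset.antisymm (fun ω hω => ?_)
    (subset_iInter fun n _ ⟨t, ht, h⟩ => ⟨t, ht, (huB n).trans h⟩)
  obtain ⟨t₀, ht₀, -⟩ := mem_iInter.1 hω 0
  obtain ⟨t₁, ht₁, hmax⟩ := isCompact_Icc.exists_isMaxOn ⟨t₀, ht₀⟩ (hcont ω)
  refine ⟨t₁, ht₁, le_of_tendsto' hu fun n => ?_⟩
  obtain ⟨t, ht, h⟩ := mem_iInter.1 hω n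
  exact h.trans (hmax ht)

lemma iInter_dyadicHitEvent (hT : 0 < T) (hcont : ∀ ω, ContinuousOn (fun t => S t ω) (Icc 0 T))
    {u : ℕ → ℝ} (hu : Tendsto u atTop (𝓝 B)) (huB : ∀ n, u n < B) :
    ⋂ n, dyadicHitEvent S T (u n) = hitEvent S B T :=
  Subset.antisymm
    ((iInter_mono fun _ => dyadicHitEvent_subset_hitEvent hT.le).trans
      (iInter_hitEvent hcont hu fun n => (huB n).le).subset)
    (subset_iInter fun n => hitEvent_subset_dyadicHitEvent hT hcont (huB n))

lemma setOf_le_runMax_eq_hitEvent (hT : 0 ≤ T)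
    (hcont : ∀ ω, ContinuousOn (fun t => S t ω) (Icc 0 T)) :
    {ω | B ≤ runMax S T ω} = hitEvent S B T := by
  ext ω
  obtain ⟨t₁, ht₁, hmax⟩ := isCompact_Icc.exists_isMaxOn (nonempty_Icc.2 hT) (hcont ω)
  have hrunMax : runMax S T ω = S t₁ ω := by
    have : Nonempty (Icc 0 T) := ⟨⟨t₁, ht₁⟩⟩
    exact le_antisymm (ciSup_le fun t => hmax t.2)
      (le_ciSup (f := fun t : Icc 0 T => S t ω) ⟨S t₁ ω, by rintro _ ⟨t, rfl⟩; exact hmax t.2⟩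
        ⟨t₁, ht₁⟩)
  rw [mem_ofPred_eq, hrunMax]
  exact ⟨fun h => ⟨t₁, ht₁, h⟩, fun ⟨t, ht, h⟩ => h.trans (hmax ht)⟩

-- Paths are uniformly continuous, so once the mesh is fine the sampled path cannot jump
-- from below `β` to above `γ` in one step.
lemma eventually_notMem_overshoot_dyadicTime (hT : 0 ≤ T) {ω : Ω}
    (hcont : ContinuousOn (fun t => S t ω) (Icc 0 T)) (h0 : S 0 ω < β) (hβγ : β < γ) :
    ∀ᶠ k in atTop, ω ∉ overshoot (fun i => S (dyadicTime T k i)) β γ (2 ^ k) := by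
  obtain ⟨δ, hδ, hunif⟩ := Metric.uniformContinuousOn_iff.1
    (isCompact_Icc.uniformContinuousOn_of_continuous hcont) (γ - β) (sub_pos.2 hβγ)
  filter_upwards [(tendsto_div_two_pow T).eventually (gt_mem_nhds hδ)] with k hk
  refine notMem_overshoot (by simpa using h0) fun i hi => ?_
  have hdist := hunif _ (dyadicTime_mem_Icc hT hi) _ (dyadicTime_mem_Icc hT hi.le) (by
    rwa [dyadicTime_succ, Real.dist_eq, add_sub_cancel_left, abs_of_nonneg (by positivity)])
  rw [Real.dist_eq, abs_sub_lt_iff] at hdist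
  linarith [hdist.1]

end Paths

lemma tendsto_setIntegral_of_ae_eventually_notMem {Ω : Type*} [MeasurableSpace Ω]
    {ℙ : Measure Ω} {f : Ω → ℝ} (hf : Integrable f ℙ) {E : ℕ → Set Ω}
    (hE : ∀ k, MeasurableSet (E k)) (h : ∀ᵐ ω ∂ℙ, ∀ᶠ k in atTop, ω ∉ E k) :
    Tendsto (fun k => ∫ ω in E k, f ω ∂ℙ) atTop (𝓝 0) := by
  have hdom := tendsto_integral_of_dominated_convergence (fun ω => ‖f ω‖)
    (fun k => hf.aestronglyMeasurable.indicator (hE k)) hf.norm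
    (fun k => ae_of_all _ fun ω => norm_indicator_le_norm_self f ω)
    (h.mono fun ω hω => tendsto_const_nhds.congr'
      (hω.mono fun k hk => (indicator_of_notMem hk f).symm))
  simpa [integral_indicator (hE _)] using hdom

section Martingale

variable {Ω : Type} [mΩ : MeasurableSpace Ω] {ℙ : Measure Ω}
  {ℱ : Filtration ℝ mΩ} {S : ℝ → Ω → ℝ} {T β γ B : ℝ}

lemma measurableSet_hitBy_dyadicTime (hadapt : ∀ t ∈ Icc 0 T, StronglyMeasurable[ℱ t] (S t))
    (hT : 0 ≤ T) (k : ℕ) : MeasurableSet (hitBy (fun i => S (dyadicTime T k i)) β (2 ^ k)) :=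
  measurableSet_hitBy (𝒢 := dyadicFiltration ℱ hT k) fun _ hi =>
    hadapt _ (dyadicTime_mem_Icc hT hi)

lemma measurableSet_dyadicHitEvent (hadapt : ∀ t ∈ Icc 0 T, StronglyMeasurable[ℱ t] (S t))
    (hT : 0 ≤ T) : MeasurableSet (dyadicHitEvent S T β) :=
  MeasurableSet.iUnion (measurableSet_hitBy_dyadicTime hadapt hT)

lemma measurableSet_hitEvent (hadapt : ∀ t ∈ Icc 0 T, StronglyMeasurable[ℱ t] (S t))
    (hT : 0 < T) (hcont : ∀ ω, ContinuousOn (fun t => S t ω) (Icc 0 T)) :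
    MeasurableSet (hitEvent S B T) := by
  obtain ⟨u, -, hu_mem, hu⟩ := exists_seq_strictMono_tendsto' (sub_one_lt B)
  rw [← iInter_dyadicHitEvent hT hcont hu fun n => (hu_mem n).2]
  exact MeasurableSet.iInter fun _ => measurableSet_dyadicHitEvent hadapt hT.le

lemma tendsto_setIntegral_hitBy_dyadicTime (hadapt : ∀ t ∈ Icc 0 T, StronglyMeasurable[ℱ t] (S t))
    (hint : Integrable (S T) ℙ) (hT : 0 ≤ T) :
    Tendsto (fun k => ∫ ω in hitBy (fun i => S (dyadicTime T k i)) β (2 ^ k), S T ω ∂ℙ) atTop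
      (𝓝 (∫ ω in dyadicHitEvent S T β, S T ω ∂ℙ)) :=
  tendsto_setIntegral_of_monotone (measurableSet_hitBy_dyadicTime hadapt hT)
    monotone_hitBy_dyadicTime hint.integrableOn

variable [IsFiniteMeasure ℙ]

lemma tendsto_measureReal_hitBy_dyadicTime :
    Tendsto (fun k => ℙ.real (hitBy (fun i => S (dyadicTime T k i)) β (2 ^ k))) atTop
      (𝓝 (ℙ.real (dyadicHitEvent S T β))) :=
  (ENNReal.tendsto_toReal (measure_ne_top ℙ _)).comp
    (tendsto_measure_iUnion_atTop monotone_hitBy_dyadicTime)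

lemma mul_measureReal_dyadicHitEvent_le
    (hadapt : ∀ t ∈ Icc 0 T, StronglyMeasurable[ℱ t] (S t))
    (hint : ∀ t ∈ Icc 0 T, Integrable (S t) ℙ)
    (hmart : ∀ t ∈ Icc 0 T, ∀ E, MeasurableSet[ℱ t] E →
      ∫ ω in E, S T ω ∂ℙ = ∫ ω in E, S t ω ∂ℙ) (hT : 0 ≤ T) :
    β * ℙ.real (dyadicHitEvent S T β) ≤ ∫ ω in dyadicHitEvent S T β, S T ω ∂ℙ := by
  have hST := hint T ⟨hT, le_rfl⟩
  refine le_of_tendsto_of_tendsto' (tendsto_measureReal_hitBy_dyadicTime.const_mul β)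
    (tendsto_setIntegral_hitBy_dyadicTime hadapt hST hT) fun k => ?_
  have := setIntegral_hitBy_sub_nonneg (𝒢 := dyadicFiltration ℱ hT k) (β := β)
    (fun i hi => hadapt _ (dyadicTime_mem_Icc hT hi))
    (fun i hi => hint _ (dyadicTime_mem_Icc hT hi))
    hST fun i hi => hmart _ (dyadicTime_mem_Icc hT hi)
  rw [setIntegral_sub_const hST] at this
  linarith

lemma setIntegral_dyadicHitEvent_le_mul
    (hadapt : ∀ t ∈ Icc 0 T, StronglyMeasurable[ℱ t] (S t))
    (hint : ∀ t ∈ Icc 0 T, Integrable (S t) ℙ)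
    (hmart : ∀ t ∈ Icc 0 T, ∀ E, MeasurableSet[ℱ t] E →
      ∫ ω in E, S T ω ∂ℙ = ∫ ω in E, S t ω ∂ℙ)
    (hcont : ∀ ω, ContinuousOn (fun t => S t ω) (Icc 0 T)) (hT : 0 ≤ T)
    (hinit : ∀ᵐ ω ∂ℙ, S 0 ω < β) (hβγ : β < γ) :
    ∫ ω in dyadicHitEvent S T β, S T ω ∂ℙ ≤ γ * ℙ.real (dyadicHitEvent S T β) := by
  have hST := hint T ⟨hT, le_rfl⟩
  have hover : Tendsto (fun k => ∫ ω in overshoot (fun i => S (dyadicTime T k i)) β γ (2 ^ k),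
      (S T ω - γ) ∂ℙ) atTop (𝓝 0) :=
    tendsto_setIntegral_of_ae_eventually_notMem (hST.sub (integrable_const γ))
      (fun k => measurableSet_overshoot (𝒢 := dyadicFiltration ℱ hT k)
        fun i hi => hadapt _ (dyadicTime_mem_Icc hT hi))
      (hinit.mono fun ω h0 => eventually_notMem_overshoot_dyadicTime hT (hcont ω) h0 hβγ)
  refine le_of_tendsto_of_tendsto' (tendsto_setIntegral_hitBy_dyadicTime hadapt hST hT)
    (by simpa using (tendsto_measureReal_hitBy_dyadicTime.const_mul γ).add hover)
    fun k => ?_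
  have := setIntegral_hitBy_sub_le (𝒢 := dyadicFiltration ℱ hT k) (β := β) (γ := γ)
    (fun i hi => hadapt _ (dyadicTime_mem_Icc hT hi))
    (fun i hi => hint _ (dyadicTime_mem_Icc hT hi))
    hST fun i hi => hmart _ (dyadicTime_mem_Icc hT hi)
  rw [setIntegral_sub_const hST] at this
  linarith

end Martingale

section OptionalStopping

variable {Ω : Type} [mΩ : MeasurableSpace Ω] {ℙ : Measure Ω} [IsFiniteMeasure ℙ]
  {ℱ : Filtration ℝ mΩ} {S : ℝ → Ω → ℝ} {T B s₀ : ℝ}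

theorem setIntegral_hitEvent (hadapt : ∀ t ∈ Icc 0 T, StronglyMeasurable[ℱ t] (S t))
    (hint : ∀ t ∈ Icc 0 T, Integrable (S t) ℙ)
    (hmart : ∀ t ∈ Icc 0 T, ∀ E, MeasurableSet[ℱ t] E →
      ∫ ω in E, S T ω ∂ℙ = ∫ ω in E, S t ω ∂ℙ)
    (hcont : ∀ ω, ContinuousOn (fun t => S t ω) (Icc 0 T)) (hT : 0 < T)
    (hinit : ∀ᵐ ω ∂ℙ, S 0 ω = s₀) (hB : s₀ < B) :
    ∫ ω in hitEvent S B T, S T ω ∂ℙ = B * ℙ.real (hitEvent S B T) := by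
  obtain ⟨u, hu_mono, hu_mem, hu⟩ := exists_seq_strictMono_tendsto' hB
  have hD := iInter_dyadicHitEvent hT hcont hu fun n => (hu_mem n).2
  have hDmeas : ∀ n, MeasurableSet (dyadicHitEvent S T (u n)) :=
    fun _ => measurableSet_dyadicHitEvent hadapt hT.le
  have hanti : Antitone fun n => dyadicHitEvent S T (u n) :=
    fun _ _ h => dyadicHitEvent_anti (hu_mono.monotone h)
  have hI : Tendsto (fun n => ∫ ω in dyadicHitEvent S T (u n), S T ω ∂ℙ) atTop
      (𝓝 (∫ ω in hitEvent S B T, S T ω ∂ℙ)) :=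
    hD ▸ tendsto_setIntegral_of_antitone hDmeas hanti ⟨0, (hint T ⟨hT.le, le_rfl⟩).integrableOn⟩
  have hP : Tendsto (fun n => ℙ.real (dyadicHitEvent S T (u n))) atTop
      (𝓝 (ℙ.real (hitEvent S B T))) :=
    hD ▸ (ENNReal.tendsto_toReal (measure_ne_top ℙ _)).comp
      (tendsto_measure_iInter_atTop (fun n => (hDmeas n).nullMeasurableSet) hanti
        ⟨0, measure_ne_top ℙ _⟩)
  refine le_antisymm (le_of_tendsto_of_tendsto' hI (hP.const_mul B) fun n => ?_)
    (le_of_tendsto_of_tendsto' (hu.mul hP) hI fun n =>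
      mul_measureReal_dyadicHitEvent_le hadapt hint hmart hT.le)
  exact setIntegral_dyadicHitEvent_le_mul hadapt hint hmart hcont hT.le
    (hinit.mono fun ω h => h ▸ (hu_mem n).1) (hu_mem n).2

end OptionalStopping

section CallFunctions

variable {Ω : Type*} [MeasurableSpace Ω] {ℙ : Measure Ω} {X : Ω → ℝ} {C : Set Ω}

def callOn (ℙ : Measure Ω) (X : Ω → ℝ) (C : Set Ω) (x : ℝ) : ℝ :=
  ∫ ω in C, max (X ω - x) 0 ∂ℙ

lemma convexOn_max_const_sub_zero (c : ℝ) : ConvexOn ℝ univ fun x : ℝ => max (c - x) 0 :=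
  ((convexOn_const c convex_univ).sub (concaveOn_id convex_univ)).sup
    (convexOn_const 0 convex_univ)

lemma antitone_max_const_sub_zero (c : ℝ) : Antitone fun x : ℝ => max (c - x) 0 :=
  fun _ _ h => max_le_max (by linarith) le_rfl

lemma callOn_nonneg (x : ℝ) : 0 ≤ callOn ℙ X C x :=
  integral_nonneg fun _ => le_max_right _ _

lemma callOn_eq_zero {B x : ℝ} (hCB : ∀ ω ∈ C, X ω < B) (hx : B ≤ x) : callOn ℙ X C x = 0 :=
  setIntegral_eq_zero_of_forall_eq_zero fun ω hω => max_eq_right (by linarith [hCB ω hω])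

lemma callOn_zero (hC : MeasurableSet C) (hpos : ∀ᵐ ω ∂ℙ, 0 ≤ X ω) :
    callOn ℙ X C 0 = ∫ ω in C, X ω ∂ℙ :=
  setIntegral_congr_ae hC (hpos.mono fun ω h _ => by rw [sub_zero, max_eq_left h])

variable [IsFiniteMeasure ℙ]

lemma MeasureTheory.Integrable.max_sub_const_zero (hX : Integrable X ℙ) (x : ℝ) :
    Integrable (fun ω => max (X ω - x) 0) ℙ :=
  (hX.sub (integrable_const x)).pos_part

lemma convexOn_callOn (hX : Integrable X ℙ) (hC : MeasurableSet C) :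
    ConvexOn ℝ univ (callOn ℙ X C) := by
  refine ⟨convex_univ, fun x _ y _ a b ha hb hab => ?_⟩
  have hint : ∀ z, IntegrableOn (fun ω => max (X ω - z) 0) C ℙ :=
    fun z => (hX.max_sub_const_zero z).integrableOn
  calc callOn ℙ X C (a • x + b • y)
      ≤ ∫ ω in C, (a * max (X ω - x) 0 + b * max (X ω - y) 0) ∂ℙ :=
        setIntegral_mono_on (hint _) (((hint x).const_mul a).add ((hint y).const_mul b)) hC
          fun ω _ => (convexOn_max_const_sub_zero (X ω)).2 trivial trivial ha hb hab
    _ = a • callOn ℙ X C x + b • callOn ℙ X C y := by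
        rw [integral_add ((hint x).const_mul a) ((hint y).const_mul b),
          integral_const_mul, integral_const_mul]
        rfl

lemma antitone_callOn (hX : Integrable X ℙ) : Antitone (callOn ℙ X C) :=
  fun _ _ h => setIntegral_mono (hX.max_sub_const_zero _).integrableOn
    (hX.max_sub_const_zero _).integrableOn fun ω => antitone_max_const_sub_zero (X ω) h

lemma callOn_union {D : Set Ω} (hX : Integrable X ℙ) (hD : MeasurableSet D)
    (hCD : Disjoint C D) (x : ℝ) :
    callOn ℙ X (C ∪ D) x = callOn ℙ X C x + callOn ℙ X D x :=
  setIntegral_union hCD hD (hX.max_sub_const_zero x).integrableOn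
    (hX.max_sub_const_zero x).integrableOn

lemma sub_mul_le_callOn (hX : Integrable X ℙ) (x : ℝ) :
    ∫ ω in C, X ω ∂ℙ - x * ℙ.real C ≤ callOn ℙ X C x := by
  exact setIntegral_sub_const hX x ▸ setIntegral_mono (hX.sub (integrable_const x)).integrableOn
    (hX.max_sub_const_zero x).integrableOn fun ω => le_max_left _ _

end CallFunctions

section CallDerivatives

variable {Ω : Type*} [MeasurableSpace Ω] {ℙ : Measure Ω} [IsFiniteMeasure ℙ] {X : Ω → ℝ}
  {C : Set Ω}

lemma hasDerivWithinAt_callOn_zero (hX : Integrable X ℙ) (hpos : ∀ᵐ ω ∂ℙ, 0 < X ω) :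
    HasDerivWithinAt (callOn ℙ X C) (-ℙ.real C) (Ioi 0) 0 := by
  rw [hasDerivWithinAt_iff_tendsto_slope' self_notMem_Ioi]
  have hslope : slope (callOn ℙ X C) 0
      = fun y => ∫ ω in C, (max (X ω - y) 0 - max (X ω - 0) 0) / y ∂ℙ := funext fun y => by
    rw [slope_def_field, sub_zero, callOn, callOn, ← integral_sub
      (hX.max_sub_const_zero y).integrableOn (hX.max_sub_const_zero 0).integrableOn,
      integral_div]
  have hlim : ∫ ω in C, (-1 : ℝ) ∂ℙ = -ℙ.real C := by simp
  rw [hslope, ← hlim]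
  refine tendsto_integral_filter_of_dominated_convergence (fun _ => 1)
    (Eventually.of_forall fun y => (((hX.max_sub_const_zero y).sub
      (hX.max_sub_const_zero 0)).div_const y).aestronglyMeasurable.restrict) ?_
    (integrable_const (μ := ℙ.restrict C) (1 : ℝ)) ?_
  · filter_upwards [self_mem_nhdsWithin] with y (hy : 0 < y)
    refine ae_of_all _ fun ω => ?_
    rw [Real.norm_eq_abs, abs_div, abs_of_pos hy, div_le_one hy]
    simpa [abs_of_pos hy] using abs_max_sub_max_le_abs (X ω - y) (X ω - 0) 0
  · filter_upwards [ae_restrict_of_ae hpos] with ω hω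
    refine tendsto_const_nhds.congr' ?_
    filter_upwards [Ioo_mem_nhdsGT hω] with y hy
    rw [max_eq_left (by linarith [hy.2]), max_eq_left (by linarith), eq_div_iff hy.1.ne']
    ring

lemma hasDerivWithinAt_callOn_left {B : ℝ} (hX : Integrable X ℙ) (hC : MeasurableSet C)
    (hCB : ∀ ω ∈ C, X ω < B) :
    HasDerivWithinAt (callOn ℙ X C) 0 (Iio B) B := by
  rw [hasDerivWithinAt_iff_tendsto_slope' self_notMem_Iio]
  have hslope : slope (callOn ℙ X C) B = fun y => ∫ ω in C, max (X ω - y) 0 / (y - B) ∂ℙ :=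
    funext fun y => by
      rw [slope_def_field, callOn_eq_zero hCB le_rfl, sub_zero, callOn, integral_div]
  suffices Tendsto (fun y => ∫ ω in C, max (X ω - y) 0 / (y - B) ∂ℙ) (𝓝[<] B)
      (𝓝 (∫ ω in C, (0 : ℝ) ∂ℙ)) by
    rw [hslope]; rwa [integral_zero] at this
  refine tendsto_integral_filter_of_dominated_convergence (fun _ => 1)
    (Eventually.of_forall fun y =>
      ((hX.max_sub_const_zero y).div_const (y - B)).aestronglyMeasurable.restrict) ?_
    (integrable_const (μ := ℙ.restrict C) (1 : ℝ)) ?_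
  · filter_upwards [self_mem_nhdsWithin] with y (hy : y < B)
    filter_upwards [ae_restrict_mem hC] with ω hω
    rw [Real.norm_eq_abs, abs_div, abs_of_neg (sub_neg.2 hy), abs_of_nonneg (le_max_right _ _),
      div_le_one (by linarith)]
    exact max_le (by linarith [hCB ω hω]) (by linarith)
  · filter_upwards [ae_restrict_mem hC] with ω hω
    refine tendsto_const_nhds.congr' ?_
    filter_upwards [Ioo_mem_nhdsLT (hCB ω hω)] with y hy
    rw [max_eq_right (by linarith [hy.1]), zero_div]

end CallDerivatives

section BarrierCall

variable {Ω : Type*} [MeasurableSpace Ω] {ℙ : Measure Ω} {X : Ω → ℝ} {A A' : Set Ω}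
  {B B' : ℝ}

lemma hasDerivWithinAt_mul_max_const_sub_zero_left (r : ℝ) :
    HasDerivWithinAt (fun x => r * max (B - x) 0) (-r) (Iio B) B := by
  have h : HasDerivAt (fun x => r * (B - x)) (-r) B := by
    simpa using ((hasDerivAt_id B).const_sub B).const_mul r
  exact h.hasDerivWithinAt.congr (fun x (hx : x < B) => by rw [max_eq_left (by linarith)])
    (by simp)

lemma hasDerivAt_mul_max_const_sub_zero (r : ℝ) {x : ℝ} (hx : x < B) :
    HasDerivAt (fun x => r * max (B - x) 0) (-r) x := by
  have h : HasDerivAt (fun x => r * (B - x)) (-r) x := by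
    simpa using ((hasDerivAt_id x).const_sub B).const_mul r
  exact h.congr_of_eventuallyEq <| eventually_of_mem (Iio_mem_nhds hx) fun y (hy : y < B) => by
    simp only [max_eq_left (sub_nonneg.2 hy.le)]

/-- The call function of the payoff equal to `X` off `A` and to `B` on `A`. -/
def barrierCall (ℙ : Measure Ω) (X : Ω → ℝ) (A : Set Ω) (B x : ℝ) : ℝ :=
  callOn ℙ X Aᶜ x + ℙ.real A * max (B - x) 0

lemma barrierCall_nonneg (x : ℝ) : 0 ≤ barrierCall ℙ X A B x :=
  add_nonneg (callOn_nonneg x) (mul_nonneg measureReal_nonneg (le_max_right _ _))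

lemma barrierCall_eq_zero {x : ℝ} (hAB : ∀ ω ∉ A, X ω < B) (hx : B ≤ x) :
    barrierCall ℙ X A B x = 0 := by
  rw [barrierCall, callOn_eq_zero (C := Aᶜ) hAB hx, max_eq_right (by linarith), mul_zero, add_zero]

lemma barrierCall_zero (hX : Integrable X ℙ) (hA : MeasurableSet A)
    (hpos : ∀ᵐ ω ∂ℙ, 0 ≤ X ω) (hB : 0 ≤ B) (hbar : ∫ ω in A, X ω ∂ℙ = B * ℙ.real A) :
    barrierCall ℙ X A B 0 = ∫ ω, X ω ∂ℙ := by
  rw [barrierCall, callOn_zero hA.compl hpos, sub_zero, max_eq_left hB, mul_comm, ← hbar,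
    add_comm, integral_add_compl hA hX]

variable [IsFiniteMeasure ℙ]

lemma convexOn_barrierCall (hX : Integrable X ℙ) (hA : MeasurableSet A) :
    ConvexOn ℝ univ (barrierCall ℙ X A B) :=
  (convexOn_callOn hX hA.compl).add ((convexOn_max_const_sub_zero B).smul measureReal_nonneg)

lemma antitone_barrierCall (hX : Integrable X ℙ) : Antitone (barrierCall ℙ X A B) :=
  (antitone_callOn hX).add fun _ _ h =>
    mul_le_mul_of_nonneg_left (antitone_max_const_sub_zero B h) measureReal_nonneg

lemma hasDerivWithinAt_barrierCall_zero [IsProbabilityMeasure ℙ] (hX : Integrable X ℙ)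
    (hA : MeasurableSet A) (hpos : ∀ᵐ ω ∂ℙ, 0 < X ω) (hB : 0 < B) :
    HasDerivWithinAt (barrierCall ℙ X A B) (-1) (Ioi 0) 0 := by
  have h := (hasDerivWithinAt_callOn_zero (C := Aᶜ) hX hpos).add
    (hasDerivAt_mul_max_const_sub_zero (ℙ.real A) hB).hasDerivWithinAt
  refine h.congr_deriv ?_
  rw [← neg_add, add_comm, measureReal_add_measureReal_compl hA, probReal_univ]

lemma hasDerivWithinAt_barrierCall_left (hX : Integrable X ℙ) (hA : MeasurableSet A)
    (hAB : ∀ ω ∉ A, X ω < B) :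
    HasDerivWithinAt (barrierCall ℙ X A B) (-ℙ.real A) (Iio B) B :=
  ((hasDerivWithinAt_callOn_left hX hA.compl hAB).add
    (hasDerivWithinAt_mul_max_const_sub_zero_left (ℙ.real A))).congr_deriv (zero_add _)

lemma barrierCall_sub_barrierCall (hX : Integrable X ℙ) (hA : MeasurableSet A)
    (hA' : MeasurableSet A') (hA'A : A' ⊆ A) (x : ℝ) :
    barrierCall ℙ X A' B' x - barrierCall ℙ X A B x + ℙ.real A * max (B - x) 0
      = callOn ℙ X (A \ A') x + ℙ.real A' * max (B' - x) 0 := by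
  have hcompl : A'ᶜ = Aᶜ ∪ A \ A' := by
    ext ω; by_cases ω ∈ A <;> by_cases ω ∈ A' <;> simp_all [@hA'A ω]
  rw [barrierCall, barrierCall, hcompl,
    callOn_union hX (hA.diff hA') (disjoint_compl_left.mono_right sdiff_subset)]
  ring

lemma mul_max_sub_le_callOn_sdiff (hX : Integrable X ℙ) (hA' : MeasurableSet A')
    (hA'A : A' ⊆ A) (hbar : ∫ ω in A, X ω ∂ℙ = B * ℙ.real A)
    (hbar' : ∫ ω in A', X ω ∂ℙ = B' * ℙ.real A') (x : ℝ) :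
    ℙ.real A * max (B - x) 0 ≤ callOn ℙ X (A \ A') x + ℙ.real A' * max (B' - x) 0 := by
  rcases le_or_gt B x with hx | hx
  · rw [max_eq_right (sub_nonpos.2 hx), mul_zero]
    exact add_nonneg (callOn_nonneg x) (mul_nonneg measureReal_nonneg (le_max_right _ _))
  · have hcall := sub_mul_le_callOn (C := A \ A') hX x
    rw [setIntegral_sdiff hA' hX.integrableOn hA'A, hbar, hbar', measureReal_sdiff hA'A hA']
      at hcall
    have hmax : ℙ.real A' * (B' - x) ≤ ℙ.real A' * max (B' - x) 0 :=
      mul_le_mul_of_nonneg_left (le_max_left _ _) measureReal_nonneg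
    rw [max_eq_left (sub_nonneg.2 hx.le)]
    linarith

lemma barrierCall_le_barrierCall (hX : Integrable X ℙ) (hA : MeasurableSet A)
    (hA' : MeasurableSet A') (hA'A : A' ⊆ A) (hbar : ∫ ω in A, X ω ∂ℙ = B * ℙ.real A)
    (hbar' : ∫ ω in A', X ω ∂ℙ = B' * ℙ.real A') (x : ℝ) :
    barrierCall ℙ X A B x ≤ barrierCall ℙ X A' B' x := by
  have := barrierCall_sub_barrierCall (B := B) (B' := B') hX hA hA' hA'A x
  have := mul_max_sub_le_callOn_sdiff hX hA' hA'A hbar hbar' x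
  linarith

lemma convexOn_barrierCall_increment (hX : Integrable X ℙ) (hA : MeasurableSet A)
    (hA' : MeasurableSet A') (hA'A : A' ⊆ A) :
    ConvexOn ℝ univ fun x =>
      barrierCall ℙ X A' B' x - barrierCall ℙ X A B x + ℙ.real A * max (B - x) 0 := by
  simp only [barrierCall_sub_barrierCall hX hA hA' hA'A]
  exact (convexOn_callOn hX (hA.diff hA')).add
    ((convexOn_max_const_sub_zero B').smul measureReal_nonneg)

end BarrierCall

section Decomposition

variable {Ω : Type*} [MeasurableSpace Ω] {ℙ : Measure Ω} [IsProbabilityMeasure ℙ] {X : Ω → ℝ}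

theorem exists_barrierCall_decomposition (hX : Integrable X ℙ) (hpos : ∀ᵐ ω ∂ℙ, 0 < X ω)
    {s₀ : ℝ} (hmean : ∫ ω, X ω ∂ℙ = s₀) {m : ℕ} {B b : ℕ → ℝ} (A : ℕ → Set Ω)
    (hA : ∀ j, 1 ≤ j → j ≤ m → MeasurableSet (A j))
    (hAanti : ∀ j, 1 ≤ j → j < m → A (j + 1) ⊆ A j)
    (hbar : ∀ j, 1 ≤ j → j ≤ m → ∫ ω in A j, X ω ∂ℙ = B j * ℙ.real (A j))
    (hbelow : ∀ j, 1 ≤ j → j ≤ m → ∀ ω ∉ A j, X ω < B j)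
    (hB : ∀ j, 1 ≤ j → j ≤ m → 0 < B j)
    (hb : ∀ j, 1 ≤ j → j ≤ m → ℙ.real (A j) = b j)
    {μ : Measure ℝ} (hμ : ∀ x, ∫ y, max (y - x) 0 ∂μ = callOn ℙ X univ x) :
    ∃ 𝔠 : ℕ → ℝ → ℝ,
      (∀ x : ℝ, 0 ≤ x → 𝔠 (m + 1) x = ∫ y, max (y - x) 0 ∂μ) ∧
      ∀ j, 1 ≤ j → j ≤ m →
        ConvexOn ℝ (Ici 0) (𝔠 j) ∧
        (∀ x : ℝ, 0 ≤ x → 𝔠 j x ∈ Icc 0 s₀) ∧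
        (∀ x : ℝ, 0 ≤ x → 0 ≤ 𝔠 1 x ∧ 𝔠 j x ≤ 𝔠 (j + 1) x) ∧
        HasDerivWithinAt (𝔠 j) (-1) (Ioi 0) 0 ∧
        𝔠 j 0 = s₀ ∧
        (∀ x : ℝ, B j ≤ x → 𝔠 j x = 0) ∧
        HasDerivWithinAt (𝔠 j) (-(b j)) (Iio (B j)) (B j) ∧
        ConvexOn ℝ (Ici 0) (fun x => 𝔠 (j + 1) x - 𝔠 j x + b j * max (B j - x) 0) := by
  -- Beyond the last barrier the event is empty, which turns `𝔠 (m + 1)` into the call function.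
  set E : ℕ → Set Ω := fun j => if j ≤ m then A j else ∅ with hEdef
  have hE : ∀ j, 1 ≤ j → MeasurableSet (E j) := fun j hj => by
    by_cases hjm : j ≤ m <;> simp [hEdef, hjm, hA j hj]
  have hEbar : ∀ j, 1 ≤ j → ∫ ω in E j, X ω ∂ℙ = B j * ℙ.real (E j) := fun j hj => by
    by_cases hjm : j ≤ m <;> simp [hEdef, hjm, hbar j hj]
  have hEanti : ∀ j, 1 ≤ j → j ≤ m → E (j + 1) ⊆ E j := fun j hj hjm => by
    by_cases hjm' : j + 1 ≤ m
    · simp [hEdef, hjm, hjm', hAanti j hj hjm']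
    · simp [hEdef, hjm']
  refine ⟨fun j => barrierCall ℙ X (E j) (B j), fun x _ => ?_, fun j hj hjm => ?_⟩
  · simp [hEdef, barrierCall, hμ]
  have h0 : barrierCall ℙ X (E j) (B j) 0 = s₀ := by
    rw [barrierCall_zero hX (hE j hj) (hpos.mono fun _ h => h.le) (hB j hj hjm).le
      (hEbar j hj), hmean]
  obtain ⟨hEbj, hEbelow⟩ : ℙ.real (E j) = b j ∧ ∀ ω ∉ E j, X ω < B j := by
    simp only [hEdef, if_pos hjm]
    exact ⟨hb j hj hjm, hbelow j hj hjm⟩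
  refine ⟨(convexOn_barrierCall hX (hE j hj)).subset (subset_univ _) (convex_Ici 0),
    fun x hx => ⟨barrierCall_nonneg x, (antitone_barrierCall hX hx).trans_eq h0⟩,
    fun x _ => ⟨barrierCall_nonneg x, barrierCall_le_barrierCall hX (hE j hj)
      (hE (j + 1) (by omega)) (hEanti j hj hjm) (hEbar j hj) (hEbar (j + 1) (by omega)) x⟩,
    hasDerivWithinAt_barrierCall_zero hX (hE j hj) hpos (hB j hj hjm), h0,
    fun x hx => barrierCall_eq_zero hEbelow hx,
    hEbj ▸ hasDerivWithinAt_barrierCall_left hX (hE j hj) hEbelow,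
    hEbj ▸ (convexOn_barrierCall_increment hX (hE j hj) (hE (j + 1) (by omega))
      (hEanti j hj hjm)).subset (subset_univ _) (convex_Ici 0)⟩

end Decomposition

section Market

variable {Ω : Type} [mΩ : MeasurableSpace Ω] {ℙ : Measure Ω} {ℱ : Filtration ℝ mΩ}
  {S : ℝ → Ω → ℝ} {s₀ T : ℝ}

lemma IsPosContMart.setIntegral_eq [IsFiniteMeasure ℙ] (hS : IsPosContMart ℙ ℱ S s₀ T)
    (hT : 0 ≤ T) {t : ℝ} (ht : t ∈ Icc 0 T) {E : Set Ω} (hE : MeasurableSet[ℱ t] E) :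
    ∫ ω in E, S T ω ∂ℙ = ∫ ω in E, S t ω ∂ℙ := by
  rw [← setIntegral_condExp (ℱ.le t) (hS.integrable T ⟨hT, le_rfl⟩) hE]
  exact setIntegral_congr_ae (ℱ.le t _ hE)
    ((hS.mart t T ht ⟨hT, le_rfl⟩ ht.2).mono fun _ h _ => h)

lemma IsPosContMart.integral_eq [IsProbabilityMeasure ℙ] (hS : IsPosContMart ℙ ℱ S s₀ T)
    (hT : 0 ≤ T) : ∫ ω, S T ω ∂ℙ = s₀ := by
  have h := hS.setIntegral_eq hT ⟨le_rfl, hT⟩ MeasurableSet.univ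
  rw [setIntegral_univ, setIntegral_univ, integral_congr_ae hS.init] at h
  simpa using h

end Market

lemma integral_max_sub_map {Ω : Type*} [MeasurableSpace Ω] {ℙ : Measure Ω} {X : Ω → ℝ}
    (hX : AEMeasurable X ℙ) (x : ℝ) :
    ∫ y, max (y - x) 0 ∂(ℙ.map X) = callOn ℙ X univ x := by
  rw [callOn, setIntegral_univ]
  exact integral_map hX (by fun_prop : Continuous fun y : ℝ => max (y - x) 0).aestronglyMeasurable

theorem stmt_0_general (T s₀ : ℝ) (hT : 0 < T) (hs₀ : 0 < s₀)
    (n m : ℕ) (K c B b : ℕ → ℝ)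
    (hB1 : s₀ < B 1)
    (hBmono : ∀ j, 1 ≤ j → j < m → B j < B (j + 1))
    (hmodel : ∃ (Ω : Type) (mΩ : MeasurableSpace Ω) (ℙ : @Measure Ω mΩ)
      (ℱ : Filtration ℝ mΩ) (S : ℝ → Ω → ℝ),
      @IsMarketModel Ω mΩ ℙ ℱ S s₀ T n m K c B b) :
    ∃ μ : Measure ℝ, IsProbabilityMeasure μ ∧ μ (Iic 0) = 0 ∧ (∫ y, y ∂μ) = s₀ ∧
      (∀ i, 1 ≤ i → i ≤ n → (∫ y, max (y - K i) 0 ∂μ) = c i) ∧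
      ∃ 𝔠 : ℕ → ℝ → ℝ,
        (∀ x : ℝ, 0 ≤ x → 𝔠 (m + 1) x = ∫ y, max (y - x) 0 ∂μ) ∧
        ∀ j, 1 ≤ j → j ≤ m →
          ConvexOn ℝ (Ici 0) (𝔠 j) ∧
          (∀ x : ℝ, 0 ≤ x → 𝔠 j x ∈ Icc 0 s₀) ∧
          (∀ x : ℝ, 0 ≤ x → 0 ≤ 𝔠 1 x ∧ 𝔠 j x ≤ 𝔠 (j + 1) x) ∧
          HasDerivWithinAt (𝔠 j) (-1) (Ioi 0) 0 ∧
          𝔠 j 0 = s₀ ∧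
          (∀ x : ℝ, B j ≤ x → 𝔠 j x = 0) ∧
          HasDerivWithinAt (𝔠 j) (-(b j)) (Iio (B j)) (B j) ∧
          ConvexOn ℝ (Ici 0) (fun x => 𝔠 (j + 1) x - 𝔠 j x + b j * max (B j - x) 0) := by
  obtain ⟨Ω, mΩ, ℙ, ℱ, S, hℙ, hS, hcall, hbarrier⟩ := hmodel
  have hTmem : T ∈ Icc 0 T := ⟨hT.le, le_rfl⟩
  have hST : AEMeasurable (S T) ℙ :=
    ((hS.adapted T hTmem).mono (ℱ.le T)).measurable.aemeasurable
  have hpos := hS.pos T hTmem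
  have hBs₀ : ∀ j, 1 ≤ j → j ≤ m → s₀ < B j := by
    intro j hj hjm
    induction j, hj using Nat.le_induction with
    | base => exact hB1
    | succ j hj ih => exact (ih (by omega)).trans (hBmono j hj (by omega))
  have hbarrierEvent : ∀ j, 1 ≤ j → j ≤ m →
      ∫ ω in hitEvent S (B j) T, S T ω ∂ℙ = B j * ℙ.real (hitEvent S (B j) T) :=
    fun j hj hjm => setIntegral_hitEvent hS.adapted hS.integrable
      (fun t ht _ => hS.setIntegral_eq hT.le ht) hS.contPaths hT hS.init (hBs₀ j hj hjm)
  have hbarrierPrice : ∀ j, 1 ≤ j → j ≤ m → ℙ.real (hitEvent S (B j) T) = b j :=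
    fun j hj hjm => by
      rw [← hbarrier j hj hjm, ← setOf_le_runMax_eq_hitEvent hT.le hS.contPaths]; rfl
  refine ⟨ℙ.map (S T), Measure.isProbabilityMeasure_map hST, ?_, ?_, fun i hi hin => ?_,
    exists_barrierCall_decomposition (hS.integrable T hTmem) hpos (hS.integral_eq hT.le)
      (fun j => hitEvent S (B j) T) (fun _ _ _ => measurableSet_hitEvent hS.adapted hT hS.contPaths)
      (fun j hj hjm _ ⟨t, ht, h⟩ => ⟨t, ht, (hBmono j hj hjm).le.trans h⟩) hbarrierEvent
      (fun _ _ _ _ hω => not_le.1 fun h => hω ⟨T, hTmem, h⟩)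
      (fun j hj hjm => hs₀.trans (hBs₀ j hj hjm)) hbarrierPrice (integral_max_sub_map hST)⟩
  · rw [Measure.map_apply_of_aemeasurable hST measurableSet_Iic]
    exact measure_eq_zero_iff_ae_notMem.2 (hpos.mono fun _ h => not_le.2 h)
  · exact (integral_map hST aestronglyMeasurable_id).trans (hS.integral_eq hT.le)
  · rw [integral_max_sub_map hST, ← hcall i hi hin, callOn, setIntegral_univ]

/-- necessity direction of the one-maturity characterization.
If a market model exists for the given call and barrier prices, then there is a
probability measure `μ` on `(0,∞)` with mean `s₀` interpolating the call prices, and a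
decomposition `𝔠^{B₁} ≤ … ≤ 𝔠^{B_m} ≤ 𝔠^{B_{m+1}} = c_μ` satisfying conditions (a)–(e). -/
theorem stmt_0 (T s₀ : ℝ) (hT : 0 < T) (hs₀ : 0 < s₀)
    (n m : ℕ) (K c B b : ℕ → ℝ)
    (hK : ∀ i, 1 ≤ i → i ≤ n → 0 < K i)
    (hKmono : ∀ i, 1 ≤ i → i < n → K i < K (i + 1))
    (hB1 : s₀ < B 1)
    (hBmono : ∀ j, 1 ≤ j → j < m → B j < B (j + 1))
    (hb : ∀ j, 1 ≤ j → j ≤ m → b j ∈ Icc (0:ℝ) 1)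
    (hmodel : ∃ (Ω : Type) (mΩ : MeasurableSpace Ω) (ℙ : @Measure Ω mΩ)
      (ℱ : Filtration ℝ mΩ) (S : ℝ → Ω → ℝ),
      @IsMarketModel Ω mΩ ℙ ℱ S s₀ T n m K c B b) :
    ∃ μ : Measure ℝ, IsProbabilityMeasure μ ∧ μ (Iic 0) = 0 ∧ (∫ y, y ∂μ) = s₀ ∧
      (∀ i, 1 ≤ i → i ≤ n → (∫ y, max (y - K i) 0 ∂μ) = c i) ∧
      ∃ 𝔠 : ℕ → ℝ → ℝ,
        (∀ x : ℝ, 0 ≤ x → 𝔠 (m + 1) x = ∫ y, max (y - x) 0 ∂μ) ∧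
        ∀ j, 1 ≤ j → j ≤ m →
          ConvexOn ℝ (Ici 0) (𝔠 j) ∧
          (∀ x : ℝ, 0 ≤ x → 𝔠 j x ∈ Icc 0 s₀) ∧
          (∀ x : ℝ, 0 ≤ x → 0 ≤ 𝔠 1 x ∧ 𝔠 j x ≤ 𝔠 (j + 1) x) ∧
          HasDerivWithinAt (𝔠 j) (-1) (Ioi 0) 0 ∧
          𝔠 j 0 = s₀ ∧
          (∀ x : ℝ, B j ≤ x → 𝔠 j x = 0) ∧
          HasDerivWithinAt (𝔠 j) (-(b j)) (Iio (B j)) (B j) ∧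
          ConvexOn ℝ (Ici 0) (fun x => 𝔠 (j + 1) x - 𝔠 j x + b j * max (B j - x) 0) :=
  stmt_0_general T s₀ hT hs₀ n m K c B b hB1 hBmono hmodel
end
end

section
/- Let s₀ =: B₀ < B₁ < … < B_m be levels. For j = 1,…,m define c^{B_j}(x) := E[ 1_{H_{B_{j−1}} ≤ T} · (S_{T∧H_{B_j}} − x)⁺ ] and define c^{B_{m+1}}(x) := E[ 1_{H_{B_m} ≤ T} · (S_T − x)⁺ ]. Then for every j = 1,…,m and every x ∈ ℝ: Σ_{i=1}^{j−1} ( c^{B_i}(x) − ℙ(H_{B_i} ≤ T)·(B_i − x)⁺ ) + c^{B_j}(x) = E[(S_{T∧H_{B_j}} − x)⁺], and moreover Σ_{j=1}^{m} ( c^{B_j}(x) − ℙ(H_{B_j} ≤ T)·(B_j − x)⁺ ) + c^{B_{m+1}}(x) = E[(S_T − x)⁺]. -/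
/-!
On `{H_B ≤ T}` the stopped value `S_{T∧H_B}` equals `B`, because the paths are continuous and
start below `B`; off that event it equals `S_T`, and so does `S_{T∧H_{B'}}` for every `B' ≥ B`.
Hence, for consecutive levels, `E[(S_{T∧H_{B_{i+1}}} − x)⁺] − c^{B_{i+1}}(x)` and
`E[(S_{T∧H_{B_i}} − x)⁺] − ℙ(H_{B_i} ≤ T)(B_i − x)⁺` are both `E[1_{H_{B_i} > T} (S_T − x)⁺]`,
and the identities telescope from `c^{B_1}(x) = E[(S_{T∧H_{B_1}} − x)⁺]`, which holds as `H_{s₀} = 0`.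
-/

open MeasureTheory Set Filter

noncomputable section

theorem sum_Ico_sub_add_eq_of_sub_eq {M : Type*} [AddCommGroup M] {u v c : ℕ → M} {n : ℕ}
    (h₁ : u 1 = v 1) (hstep : ∀ i ∈ Finset.Ico 1 n, v (i + 1) - u (i + 1) = v i - c i) :
    ∀ j ∈ Finset.Icc 1 n, ∑ i ∈ Finset.Ico 1 j, (u i - c i) + u j = v j := by
  intro j hj
  obtain ⟨hj₁, hjn⟩ := Finset.mem_Icc.1 hj
  clear hj
  induction j, hj₁ using Nat.le_induction with
  | base => simp [h₁]
  | succ j hj₁ ih =>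
    rw [Finset.sum_Ico_succ_top hj₁, sub_eq_iff_eq_add.1 (hstep j (Finset.mem_Ico.2 ⟨hj₁, hjn⟩)),
      ← ih (Nat.le_of_succ_le hjn)]
    abel

/-- Reaching a level on a compact set is witnessed, up to every `ε > 0`, on a countable dense
subset, which makes the event measurable. -/
theorem measurableSet_exists_le_of_continuousOn {ι Ω : Type*} [TopologicalSpace ι]
    [SecondCountableTopology ι] [MeasurableSpace Ω] {S : ι → Ω → ℝ} {K : Set ι}
    (hK : IsCompact K) (hcont : ∀ ω, ContinuousOn (fun t => S t ω) K)
    (hmeas : ∀ t ∈ K, Measurable (S t)) (B : ℝ) :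
    MeasurableSet {ω | ∃ t ∈ K, B ≤ S t ω} := by
  obtain ⟨D, hDc, hD⟩ := TopologicalSpace.exists_countable_dense K
  have hD' : (Subtype.val '' D).Countable := hDc.image _
  suffices h : {ω | ∃ t ∈ K, B ≤ S t ω} =
      ⋂ n : ℕ, ⋃ q ∈ Subtype.val '' D, {ω | B - 1 / (n + 1) < S q ω} by
    rw [h]
    refine .iInter fun n => .biUnion hD' fun q hq => measurableSet_lt measurable_const ?_
    obtain ⟨q, -, rfl⟩ := hq
    exact hmeas q q.2
  ext ω
  simp only [mem_iInter, mem_iUnion, exists_prop, mem_image]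
  constructor
  · rintro ⟨t, ht, hBt⟩ n
    have hU : IsOpen {s : K | B - 1 / (n + 1) < S s ω} :=
      isOpen_lt continuous_const (hcont ω).domRestrict
    obtain ⟨q, hqD, hqU⟩ := hD.exists_mem_open hU ⟨⟨t, ht⟩, by
      show B - 1 / (n + 1) < S t ω
      have : (0 : ℝ) < 1 / (n + 1) := by positivity
      linarith⟩
    exact ⟨q, ⟨q, hqD, rfl⟩, hqU⟩
  · intro h
    obtain ⟨-, ⟨q, -, rfl⟩, -⟩ := h 0
    obtain ⟨t₀, ht₀, hmax⟩ := hK.exists_isMaxOn ⟨q, q.2⟩ (hcont ω)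
    refine ⟨t₀, ht₀, le_of_not_gt fun hlt => ?_⟩
    obtain ⟨n, hn⟩ := exists_nat_one_div_lt (sub_pos.2 hlt)
    obtain ⟨-, ⟨p, -, rfl⟩, hp⟩ := h n
    have : S p ω ≤ S t₀ ω := hmax p.2
    linarith [show B - 1 / (n + 1) < S p ω from hp]

theorem hitEvent_anti {Ω : Type} (S : ℝ → Ω → ℝ) (T : ℝ) :
    Antitone fun B => hitEvent S B T :=
  fun _ _ hab _ ⟨t, ht, hbt⟩ => ⟨t, ht, hab.trans hbt⟩

theorem stopVal_of_notMem {Ω : Type} {S : ℝ → Ω → ℝ} {B T : ℝ} {ω : Ω}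
    (h : ω ∉ hitEvent S B T) : stopVal S B T ω = S T ω := by
  rw [stopVal, hittingBtwn, if_neg (show ¬∃ t ∈ Icc 0 T, S t ω ∈ Ici B from h)]

/-- By the intermediate value theorem the path enters `[B, ∞)` exactly at `B`. -/
theorem stopVal_of_mem {Ω : Type} {S : ℝ → Ω → ℝ} {B T : ℝ} {ω : Ω}
    (hcont : ContinuousOn (fun t => S t ω) (Icc 0 T)) (h0 : S 0 ω < B)
    (h : ω ∈ hitEvent S B T) : stopVal S B T ω = B := by
  set A := Icc (0 : ℝ) T ∩ {t | S t ω ∈ Ici B}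
  have hτ : hittingBtwn S (Ici B) 0 T ω = sInf A := by
    rw [hittingBtwn, if_pos (show ∃ t ∈ Icc 0 T, S t ω ∈ Ici B from h)]
  obtain ⟨t₁, ht₁, hBt₁⟩ := h
  have hA : sInf A ∈ A :=
    (hcont.preimage_isClosed_of_isClosed isClosed_Icc isClosed_Ici).csInf_mem
      ⟨t₁, ht₁, hBt₁⟩ ⟨0, fun t ht => ht.1.1⟩
  obtain ⟨t, ht, hSt⟩ : ∃ t ∈ Icc 0 (sInf A), S t ω = B :=
    intermediate_value_Icc hA.1.1 (hcont.mono (Icc_subset_Icc_right hA.1.2)) ⟨h0.le, hA.2⟩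
  have hτt : hittingBtwn S (Ici B) 0 T ω ≤ t :=
    hittingBtwn_le_of_mem ht.1 (ht.2.trans hA.1.2) hSt.ge
  rw [stopVal, hτ, le_antisymm (hτ ▸ hτt) ht.2, hSt]

namespace IsPosContMart

variable {Ω : Type} [mΩ : MeasurableSpace Ω] {ℙ : Measure Ω} {ℱ : Filtration ℝ mΩ}
  {S : ℝ → Ω → ℝ} {s₀ T : ℝ}

theorem measurable (hS : IsPosContMart ℙ ℱ S s₀ T) {t : ℝ} (ht : t ∈ Icc 0 T) :
    Measurable (S t) :=
  (hS.adapted t ht).measurable.mono (ℱ.le t) le_rfl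

theorem measurableSet_hitEvent (hS : IsPosContMart ℙ ℱ S s₀ T) (B : ℝ) :
    MeasurableSet (hitEvent S B T) :=
  measurableSet_exists_le_of_continuousOn isCompact_Icc hS.contPaths (fun _ => hS.measurable) B

theorem setIntegral_hitEvent_init (hS : IsPosContMart ℙ ℱ S s₀ T) (hT : 0 ≤ T) (f : Ω → ℝ) :
    ∫ ω in hitEvent S s₀ T, f ω ∂ℙ = ∫ ω, f ω ∂ℙ := by
  rw [Measure.restrict_eq_self_of_ae_mem]
  filter_upwards [hS.init] with ω h0
  exact ⟨0, ⟨le_rfl, hT⟩, h0.ge⟩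

theorem ae_stopVal_eq_of_mem (hS : IsPosContMart ℙ ℱ S s₀ T) {B : ℝ} (hB : s₀ < B) :
    ∀ᵐ ω ∂ℙ, ω ∈ hitEvent S B T → stopVal S B T ω = B := by
  filter_upwards [hS.init] with ω h0
  exact stopVal_of_mem (hS.contPaths ω) (h0 ▸ hB)

theorem integrable_stopVal [IsFiniteMeasure ℙ] (hS : IsPosContMart ℙ ℱ S s₀ T) (hT : 0 ≤ T)
    {B : ℝ} (hB : s₀ < B) : Integrable (stopVal S B T) ℙ := by
  classical
  have hpw : Integrable ((hitEvent S B T).piecewise (fun _ => B) (S T)) ℙ :=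
    .piecewise (hS.measurableSet_hitEvent B) (integrable_const B).integrableOn
      (hS.integrable T ⟨hT, le_rfl⟩).integrableOn
  refine hpw.congr ?_
  filter_upwards [hS.ae_stopVal_eq_of_mem hB] with ω hω
  by_cases hmem : ω ∈ hitEvent S B T
  · simp [hmem, hω hmem]
  · simp [hmem, stopVal_of_notMem hmem]

theorem integral_sub_setIntegral_hitEvent (hS : IsPosContMart ℙ ℱ S s₀ T) {b x : ℝ}
    {G : Ω → ℝ} (hG : Integrable G ℙ)
    (hGc : ∀ ω ∉ hitEvent S b T, G ω = max (S T ω - x) 0) :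
    ∫ ω, G ω ∂ℙ - ∫ ω in hitEvent S b T, G ω ∂ℙ
      = ∫ ω in (hitEvent S b T)ᶜ, max (S T ω - x) 0 ∂ℙ := by
  rw [← setIntegral_compl (hS.measurableSet_hitEvent b) hG]
  exact setIntegral_congr_fun (hS.measurableSet_hitEvent b).compl hGc

theorem integral_max_stopVal_sub_sub [IsFiniteMeasure ℙ] (hS : IsPosContMart ℙ ℱ S s₀ T)
    (hT : 0 ≤ T) {B : ℝ} (hB : s₀ < B) (x : ℝ) :
    ∫ ω, max (stopVal S B T ω - x) 0 ∂ℙ - ℙ.real (hitEvent S B T) * max (B - x) 0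
      = ∫ ω in (hitEvent S B T)ᶜ, max (S T ω - x) 0 ∂ℙ := by
  have hhit : ∫ ω in hitEvent S B T, max (stopVal S B T ω - x) 0 ∂ℙ
      = ℙ.real (hitEvent S B T) * max (B - x) 0 := by
    rw [← smul_eq_mul, ← setIntegral_const]
    refine setIntegral_congr_ae (hS.measurableSet_hitEvent B) ?_
    filter_upwards [hS.ae_stopVal_eq_of_mem hB] with ω hω hmem
    rw [hω hmem]
  rw [← hhit]
  exact hS.integral_sub_setIntegral_hitEvent
    ((hS.integrable_stopVal hT hB).sub (integrable_const x)).pos_part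
    fun ω hω => by rw [stopVal_of_notMem hω]

theorem integral_sub_setIntegral_hitEvent_eq_stopVal [IsFiniteMeasure ℙ]
    (hS : IsPosContMart ℙ ℱ S s₀ T) (hT : 0 ≤ T) {B x : ℝ} (hB : s₀ < B) {G : Ω → ℝ}
    (hG : Integrable G ℙ) (hGc : ∀ ω ∉ hitEvent S B T, G ω = max (S T ω - x) 0) :
    ∫ ω, G ω ∂ℙ - ∫ ω in hitEvent S B T, G ω ∂ℙ
      = ∫ ω, max (stopVal S B T ω - x) 0 ∂ℙ - (ℙ (hitEvent S B T)).toReal * max (B - x) 0 := by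
  rw [hS.integral_sub_setIntegral_hitEvent hG hGc, ← measureReal_def,
    hS.integral_max_stopVal_sub_sub hT hB]

theorem sum_Ico_add_setIntegral_stopVal_eq_integral [IsFiniteMeasure ℙ]
    (hS : IsPosContMart ℙ ℱ S s₀ T) (hT : 0 ≤ T) {m : ℕ} {B : ℕ → ℝ} (hB0 : B 0 = s₀)
    (hBmono : ∀ j, j < m → B j < B (j + 1)) {j : ℕ} (hj : 1 ≤ j) (hjm : j ≤ m) (x : ℝ) :
    ∑ i ∈ Finset.Ico 1 j,
        ((∫ ω in hitEvent S (B (i - 1)) T, max (stopVal S (B i) T ω - x) 0 ∂ℙ)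
          - (ℙ (hitEvent S (B i) T)).toReal * max (B i - x) 0)
      + (∫ ω in hitEvent S (B (j - 1)) T, max (stopVal S (B j) T ω - x) 0 ∂ℙ)
      = ∫ ω, max (stopVal S (B j) T ω - x) 0 ∂ℙ := by
  refine sum_Ico_sub_add_eq_of_sub_eq
    (u := fun i => ∫ ω in hitEvent S (B (i - 1)) T, max (stopVal S (B i) T ω - x) 0 ∂ℙ)
    (v := fun i => ∫ ω, max (stopVal S (B i) T ω - x) 0 ∂ℙ)
    (c := fun i => (ℙ (hitEvent S (B i) T)).toReal * max (B i - x) 0) ?_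
    (fun i hi => ?_) j (Finset.mem_Icc.2 ⟨hj, hjm⟩)
  · rw [Nat.sub_self, hB0, hS.setIntegral_hitEvent_init hT]
  · obtain ⟨hi, him⟩ := Finset.mem_Ico.1 hi
    have hB : ∀ k, 1 ≤ k → k ≤ m → s₀ < B k := fun k hk hkm =>
      hB0 ▸ strictMonoOn_Iic_of_lt_succ hBmono (Nat.zero_le m) hkm hk
    refine hS.integral_sub_setIntegral_hitEvent_eq_stopVal hT (hB i hi him.le)
      ((hS.integrable_stopVal hT (hB (i + 1) (by omega) him)).sub (integrable_const x)).pos_part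
      fun ω hω => by rw [stopVal_of_notMem fun h => hω (hitEvent_anti S T (hBmono i him).le h)]

end IsPosContMart

theorem stmt_5_general {Ω : Type} [mΩ : MeasurableSpace Ω] (ℙ : Measure Ω) [IsProbabilityMeasure ℙ]
    (ℱ : Filtration ℝ mΩ) (S : ℝ → Ω → ℝ) (s₀ T : ℝ) (hT : 0 < T)
    (hS : IsPosContMart ℙ ℱ S s₀ T)
    (m : ℕ) (B : ℕ → ℝ) (hB0 : B 0 = s₀) (hBmono : ∀ j, j < m → B j < B (j + 1)) :
    (∀ j, 1 ≤ j → j ≤ m → ∀ x : ℝ,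
      (∑ i ∈ Finset.Ico 1 j,
          ((∫ ω in hitEvent S (B (i - 1)) T, max (stopVal S (B i) T ω - x) 0 ∂ℙ)
            - (ℙ (hitEvent S (B i) T)).toReal * max (B i - x) 0))
        + (∫ ω in hitEvent S (B (j - 1)) T, max (stopVal S (B j) T ω - x) 0 ∂ℙ)
        = ∫ ω, max (stopVal S (B j) T ω - x) 0 ∂ℙ) ∧
    (∀ x : ℝ,
      (∑ j ∈ Finset.Icc 1 m,
          ((∫ ω in hitEvent S (B (j - 1)) T, max (stopVal S (B j) T ω - x) 0 ∂ℙ)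
            - (ℙ (hitEvent S (B j) T)).toReal * max (B j - x) 0))
        + (∫ ω in hitEvent S (B m) T, max (S T ω - x) 0 ∂ℙ)
        = ∫ ω, max (S T ω - x) 0 ∂ℙ) := by
  refine ⟨fun j hj hjm x =>
    hS.sum_Ico_add_setIntegral_stopVal_eq_integral hT.le hB0 hBmono hj hjm x, fun x => ?_⟩
  rcases Nat.eq_zero_or_pos m with rfl | hm
  · rw [Finset.Icc_eq_empty (by omega), Finset.sum_empty, zero_add, hB0,
      hS.setIntegral_hitEvent_init hT.le]
  · have hBm : s₀ < B m := hB0 ▸ strictMonoOn_Iic_of_lt_succ hBmono (Nat.zero_le m) (le_refl m) hm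
    have hlast := hS.integral_sub_setIntegral_hitEvent_eq_stopVal hT.le hBm
      (G := fun ω => max (S T ω - x) 0)
      ((hS.integrable T ⟨hT.le, le_rfl⟩).sub (integrable_const x)).pos_part fun _ _ => rfl
    rw [← Finset.Ico_add_one_right_eq_Icc, Finset.sum_Ico_succ_top (a := 1) hm]
    linarith [hS.sum_Ico_add_setIntegral_stopVal_eq_integral hT.le hB0 hBmono hm le_rfl x]

/-- Levels `s₀ = B₀ < B₁ < … < B_m`; with
`c^{B_j}(x) = E[1_{H_{B_{j−1}} ≤ T}·(S_{T∧H_{B_j}} − x)⁺]` for `j = 1,…,m` and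
`c^{B_{m+1}}(x) = E[1_{H_{B_m} ≤ T}·(S_T − x)⁺]`, for every `j = 1,…,m` and every `x`,
`Σ_{i=1}^{j−1} (c^{B_i}(x) − ℙ(H_{B_i} ≤ T)·(B_i − x)⁺) + c^{B_j}(x) = E[(S_{T∧H_{B_j}} − x)⁺]`,
and `Σ_{j=1}^{m} (c^{B_j}(x) − ℙ(H_{B_j} ≤ T)·(B_j − x)⁺) + c^{B_{m+1}}(x) = E[(S_T − x)⁺]`. -/
theorem stmt_5 {Ω : Type} [mΩ : MeasurableSpace Ω] (ℙ : Measure Ω) [IsProbabilityMeasure ℙ]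
    (ℱ : Filtration ℝ mΩ) (S : ℝ → Ω → ℝ) (s₀ T : ℝ) (hs₀ : 0 < s₀) (hT : 0 < T)
    (hS : IsPosContMart ℙ ℱ S s₀ T)
    (m : ℕ) (B : ℕ → ℝ) (hB0 : B 0 = s₀) (hBmono : ∀ j, j < m → B j < B (j + 1)) :
    (∀ j, 1 ≤ j → j ≤ m → ∀ x : ℝ,
      (∑ i ∈ Finset.Ico 1 j,
          ((∫ ω in hitEvent S (B (i - 1)) T, max (stopVal S (B i) T ω - x) 0 ∂ℙ)
            - (ℙ (hitEvent S (B i) T)).toReal * max (B i - x) 0))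
        + (∫ ω in hitEvent S (B (j - 1)) T, max (stopVal S (B j) T ω - x) 0 ∂ℙ)
        = ∫ ω, max (stopVal S (B j) T ω - x) 0 ∂ℙ) ∧
    (∀ x : ℝ,
      (∑ j ∈ Finset.Icc 1 m,
          ((∫ ω in hitEvent S (B (j - 1)) T, max (stopVal S (B j) T ω - x) 0 ∂ℙ)
            - (ℙ (hitEvent S (B j) T)).toReal * max (B j - x) 0))
        + (∫ ω in hitEvent S (B m) T, max (S T ω - x) 0 ∂ℙ)
        = ∫ ω, max (S T ω - x) 0 ∂ℙ) :=
  stmt_5_general (mΩ := mΩ) ℙ ℱ S s₀ T hT hS m B hB0 hBmono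
end
end

section
/- Let s₀ > 0, levels s₀ =: B₀ < B₁ < … < B_m < B_{m+1} < ∞, numbers b(B₁),…,b(B_{m+1}) ∈ [0,1] with b(B₀) := 1, and let c_μ be the call function of a probability measure μ on (0,∞) with mean s₀ such that μ((B_{m+1},∞)) = 0 and the left derivative of c_μ at B_{m+1} equals −b(B_{m+1}). Suppose c^{B₁},…,c^{B_{m+1}} : [0,∞) → [0,s₀] satisfy, for every j = 1,…,m+1: (a) c^{B_j} is convex; (b) the right derivative of c^{B_j} at 0 equals −b(B_{j−1}) and c^{B_j}(0) = b(B_{j−1})·B_{j−1}; (c) the left derivative of c^{B_j} at B_j equals −b(B_j) and c^{B_j}(x) = 0 for all x ≥ B_j; (d) b(B_{j−1})·(B_{j−1} − x)⁺ ≤ c^{B_j}(x) for all x ≥ 0; (e) Σ_{j=1}^{m} ( c^{B_j}(x) − b(B_j)·(B_j − x)⁺ ) + c^{B_{m+1}}(x) = c_μ(x) for all x ≥ 0. Then the functions 𝔠^{B_j}(x) := Σ_{i=1}^{j−1} ( c^{B_i}(x) − b(B_i)·(B_i − x)⁺ ) + c^{B_j}(x), j = 1,…,m, map [0,∞) to [0,s₀]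 and, setting 𝔠^{B_{m+1}} := c_μ, satisfy for every j = 1,…,m: 𝔠^{B_j} is convex; 0 ≤ 𝔠^{B₁} ≤ … ≤ 𝔠^{B_m} ≤ 𝔠^{B_{m+1}} pointwise; the right derivative of 𝔠^{B_j} at 0 equals −1, 𝔠^{B_j}(0) = s₀, and 𝔠^{B_j}(x) = 0 for x ≥ B_j; the left derivative of 𝔠^{B_j} at B_j equals −b(B_j); and x ↦ 𝔠^{B_{j+1}}(x) − 𝔠^{B_j}(x) + b(B_j)·(B_j − x)⁺ is convex on [0,∞). -/
/-!
The increment `𝔠^{B_{j+1}} - 𝔠^{B_j} = c^{B_{j+1}} - b(B_j) (B_j - x)⁺` is nonnegative by (d),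
so the `𝔠^{B_j}` increase up to `c_μ ≤ s₀`; by (b) it vanishes at `0` together with its right derivative, so every
`𝔠^{B_j}` has the value `s₀` and the slope `-1` of `𝔠^{B_1} = c^{B_1}` at `0`. Beyond `B_{j-1}` all
summands but `c^{B_j}` vanish, which gives the behaviour at `B_j`. Finally each
`c^{B_i} - b(B_i) (B_i - x)⁺` is convex: subtracting the kink at `B_i` exactly cancels the jump of
the slope of `c^{B_i}` from `-b(B_i)` to `0` there.
-/

open MeasureTheory Set Filter Topology

lemma ConvexOn.finset_sum {𝕜 E β ι : Type*} [Semiring 𝕜] [PartialOrder 𝕜] [AddCommMonoid E]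
    [AddCommMonoid β] [PartialOrder β] [IsOrderedAddMonoid β] [SMul 𝕜 E] [Module 𝕜 β]
    {s : Set E} (hs : Convex 𝕜 s) (t : Finset ι) {f : ι → E → β}
    (hf : ∀ i ∈ t, ConvexOn 𝕜 s (f i)) : ConvexOn 𝕜 s fun x => ∑ i ∈ t, f i x := by
  simpa only [← Finset.sum_apply] using
    Finset.sum_induction f (ConvexOn 𝕜 s) (fun _ _ => ConvexOn.add) (convexOn_const 0 hs) hf

lemma ConvexOn.antitoneOn_of_hasDerivWithinAt_Iio {f : ℝ → ℝ} {a b f' : ℝ}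
    (hf : ConvexOn ℝ (Icc a b) f) (hf' : HasDerivWithinAt f f' (Iio b) b) (hf'_nonpos : f' ≤ 0) :
    AntitoneOn f (Icc a b) := by
  have hb_le : ∀ y ∈ Icc a b, f b ≤ f y := by
    intro y hy
    rcases hy.2.lt_or_eq with hyb | rfl
    · have hslope := (hf.slope_le_of_hasDerivWithinAt_Iio hy ⟨hy.1.trans hy.2, le_rfl⟩ hyb
        hf').trans hf'_nonpos
      rwa [slope_def_field, div_le_iff₀ (sub_pos.2 hyb), zero_mul, sub_nonpos] at hslope
    · exact le_rfl
  intro x hx y hy hxy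
  rcases hy.2.lt_or_eq with hyb | rfl
  · exact hf.le_left_of_right_le'' hx ⟨hx.1.trans (hxy.trans hy.2), le_rfl⟩ hxy hyb (hb_le y hy)
  · exact hb_le x hx

-- `f x - β (B - x)⁺ = h (min x B)` with `h x = f x + β (x - B)`: the left slope `-β` of `f` at `B`
-- makes `h` nonincreasing on `[0, B]`, so `h ∘ min · B` is convex.
lemma ConvexOn.sub_mul_max_sub {f : ℝ → ℝ} {B β : ℝ} (hB : 0 ≤ B)
    (hf : ConvexOn ℝ (Ici 0) f) (hf_vanish : ∀ x, B ≤ x → f x = 0)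
    (hf' : HasDerivWithinAt f (-β) (Iio B) B) :
    ConvexOn ℝ (Ici 0) fun x => f x - β * max (B - x) 0 := by
  set h : ℝ → ℝ := fun x => f x + β * (x - B)
  have h_conv : ConvexOn ℝ (Icc 0 B) h := by
    refine (hf.subset Icc_subset_Ici_self (convex_Icc 0 B)).add ?_
    exact ((LinearMap.mul ℝ ℝ β).convexOn (convex_Icc 0 B)).add_const (-(β * B)) |>.congr
      fun x _ => by simp only [Pi.add_apply, LinearMap.mul_apply']; ring
  have h' : HasDerivWithinAt h 0 (Iio B) B :=
    (hf'.add (((hasDerivWithinAt_id B _).sub_const B).const_mul β)).congr_deriv (by ring)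
  have h_anti := h_conv.antitoneOn_of_hasDerivWithinAt_Iio h' le_rfl
  have h_image : (fun x => min x B) '' Ici 0 = Icc 0 B := by
    ext y
    constructor
    · rintro ⟨x, hx, rfl⟩
      exact ⟨le_min hx hB, min_le_right x B⟩
    · rintro ⟨hy0, hyB⟩
      exact ⟨y, hy0, min_eq_left hyB⟩
  have h_min : ConcaveOn ℝ (Ici 0) fun x : ℝ => min x B :=
    (concaveOn_id (convex_Ici 0)).inf (concaveOn_const B (convex_Ici 0))
  rw [← h_image] at h_conv h_anti
  refine (h_conv.comp_concaveOn h_min h_anti).congr fun x _ => ?_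
  rcases le_total x B with hxB | hBx
  · simp only [h, Function.comp_apply, min_eq_left hxB, max_eq_left (sub_nonneg.2 hxB)]
    ring
  · simp [h, min_eq_right hBx, max_eq_right (sub_nonpos.2 hBx), hf_vanish B le_rfl, hf_vanish x hBx]

lemma hasDerivAt_mul_max_sub (β : ℝ) {B x : ℝ} (hx : x < B) :
    HasDerivAt (fun y => β * max (B - y) 0) (-β) x := by
  have hev : (fun y => β * (B - y)) =ᶠ[𝓝 x] fun y => β * max (B - y) 0 := by
    filter_upwards [eventually_lt_nhds hx] with y hy
    rw [max_eq_left (sub_nonneg.2 hy.le)]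
  simpa using (((hasDerivAt_id x).const_sub B).const_mul β).congr_of_eventuallyEq hev.symm

lemma integral_max_sub_le_integral {μ : Measure ℝ} (hμ : μ (Iic 0) = 0)
    (hint : Integrable (fun y => y) μ) {x : ℝ} (hx : 0 ≤ x) :
    ∫ y, max (y - x) 0 ∂μ ≤ ∫ y, y ∂μ := by
  have hpos : ∀ᵐ y ∂μ, 0 < y := by
    rw [ae_iff]
    simp only [not_lt]
    exact hμ
  refine integral_mono_of_nonneg (ae_of_all _ fun y => le_max_right _ _) hint ?_
  filter_upwards [hpos] with y hy
  exact max_le (by linarith) hy.le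

noncomputable def partialCall (c : ℕ → ℝ → ℝ) (b B : ℕ → ℝ) (j : ℕ) (x : ℝ) : ℝ :=
  (∑ i ∈ Finset.Ico 1 j, (c i x - b i * max (B i - x) 0)) + c j x

section partialCall

variable {m : ℕ} {b B : ℕ → ℝ} {c : ℕ → ℝ → ℝ}

lemma partialCall_one (x : ℝ) : partialCall c b B 1 x = c 1 x := by
  simp [partialCall]

lemma partialCall_succ {k : ℕ} (hk : 1 ≤ k) (x : ℝ) :
    partialCall c b B (k + 1) x =
      partialCall c b B k x + (c (k + 1) x - b k * max (B k - x) 0) := by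
  rw [partialCall, partialCall, Finset.sum_Ico_succ_top hk]
  ring

lemma monotoneOn_partialCall
    (hc : ∀ j, 1 ≤ j → j ≤ m + 1 → ∀ x, 0 ≤ x → b (j - 1) * max (B (j - 1) - x) 0 ≤ c j x)
    {x : ℝ} (hx : 0 ≤ x) : MonotoneOn (fun k => partialCall c b B k x) (Icc 1 (m + 1)) := by
  refine monotoneOn_of_le_add_one ordConnected_Icc fun k _ hk hk' => ?_
  have hlow := hc (k + 1) (by omega) hk'.2 x hx
  rw [Nat.add_sub_cancel] at hlow
  rw [partialCall_succ hk.1]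
  linarith

lemma partialCall_apply_zero (hB : ∀ i, i ≤ m → 0 ≤ B i)
    (hc : ∀ j, 1 ≤ j → j ≤ m + 1 → c j 0 = b (j - 1) * B (j - 1)) :
    ∀ k, 1 ≤ k → k ≤ m + 1 → partialCall c b B k 0 = b 0 * B 0 := by
  intro k hk1
  induction k, hk1 using Nat.le_induction with
  | base => simpa [partialCall] using hc 1 le_rfl (by omega)
  | succ k hk ih =>
    intro hkm
    rw [partialCall_succ hk, ih (by omega), hc (k + 1) (by omega) hkm, Nat.add_sub_cancel,
      sub_zero, max_eq_left (hB k (by omega))]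
    ring

lemma hasDerivWithinAt_partialCall_zero (hB : ∀ i, i ≤ m → 0 < B i)
    (hc : ∀ j, 1 ≤ j → j ≤ m + 1 → HasDerivWithinAt (c j) (-b (j - 1)) (Ioi 0) 0) :
    ∀ k, 1 ≤ k → k ≤ m + 1 → HasDerivWithinAt (partialCall c b B k) (-b 0) (Ioi 0) 0 := by
  intro k hk1
  induction k, hk1 using Nat.le_induction with
  | base =>
    intro _
    exact (hc 1 le_rfl (by omega)).congr (fun x _ => partialCall_one x) (partialCall_one 0)
  | succ k hk ih =>
    intro hkm
    have hck := hc (k + 1) (by omega) hkm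
    rw [Nat.add_sub_cancel] at hck
    have hsum := (ih (by omega)).add
      (hck.sub (hasDerivAt_mul_max_sub (b k) (hB k (by omega))).hasDerivWithinAt)
    rw [sub_self, add_zero] at hsum
    exact hsum.congr (fun x _ => partialCall_succ hk x) (partialCall_succ hk 0)

lemma partialCall_eq_of_le (hB : MonotoneOn B (Iic (m + 1)))
    (hc : ∀ j, 1 ≤ j → j ≤ m + 1 → ∀ x, B j ≤ x → c j x = 0)
    {j : ℕ} (hj : j ≤ m + 1) {x : ℝ} (hx : B (j - 1) ≤ x) : partialCall c b B j x = c j x := by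
  rw [partialCall, add_eq_right]
  refine Finset.sum_eq_zero fun i hi => ?_
  rw [Finset.mem_Ico] at hi
  have hBi : B i ≤ x := (hB (mem_Iic.2 (by omega)) (mem_Iic.2 (by omega)) (by omega)).trans hx
  rw [hc i hi.1 (by omega) x hBi, max_eq_right (by linarith), mul_zero, sub_zero]

lemma partialCall_eq_zero_of_le (hB : MonotoneOn B (Iic (m + 1)))
    (hc : ∀ j, 1 ≤ j → j ≤ m + 1 → ∀ x, B j ≤ x → c j x = 0)
    {j : ℕ} (hj1 : 1 ≤ j) (hj : j ≤ m + 1) {x : ℝ} (hx : B j ≤ x) : partialCall c b B j x = 0 := by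
  have hBx : B (j - 1) ≤ x := (hB (mem_Iic.2 (by omega)) (mem_Iic.2 hj) (by omega)).trans hx
  rw [partialCall_eq_of_le hB hc hj hBx, hc j hj1 hj x hx]

lemma hasDerivWithinAt_partialCall_Iio (hB : StrictMonoOn B (Iic (m + 1)))
    (hvanish : ∀ j, 1 ≤ j → j ≤ m + 1 → ∀ x, B j ≤ x → c j x = 0)
    (hderiv : ∀ j, 1 ≤ j → j ≤ m + 1 → HasDerivWithinAt (c j) (-b j) (Iio (B j)) (B j))
    {j : ℕ} (hj1 : 1 ≤ j) (hj : j ≤ m + 1) :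
    HasDerivWithinAt (partialCall c b B j) (-b j) (Iio (B j)) (B j) := by
  have hlt : B (j - 1) < B j := hB (mem_Iic.2 (by omega)) (mem_Iic.2 (by omega)) (by omega)
  have hev : partialCall c b B j =ᶠ[𝓝 (B j)] c j := by
    filter_upwards [eventually_gt_nhds hlt] with x hx
    exact partialCall_eq_of_le hB.monotoneOn hvanish hj hx.le
  exact (hderiv j hj1 hj).congr_of_eventuallyEq (hev.filter_mono nhdsWithin_le_nhds)
    hev.eq_of_nhds

lemma convexOn_partialCall (hB : ∀ i, i ≤ m → 0 ≤ B i)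
    (hconv : ∀ j, 1 ≤ j → j ≤ m + 1 → ConvexOn ℝ (Ici 0) (c j))
    (hvanish : ∀ j, 1 ≤ j → j ≤ m + 1 → ∀ x, B j ≤ x → c j x = 0)
    (hderiv : ∀ j, 1 ≤ j → j ≤ m + 1 → HasDerivWithinAt (c j) (-b j) (Iio (B j)) (B j))
    {j : ℕ} (hj1 : 1 ≤ j) (hj : j ≤ m + 1) : ConvexOn ℝ (Ici 0) (partialCall c b B j) := by
  refine .add (ConvexOn.finset_sum (convex_Ici 0) _ fun i hi => ?_) (hconv j hj1 hj)
  rw [Finset.mem_Ico] at hi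
  exact (hconv i hi.1 (by omega)).sub_mul_max_sub (hB i (by omega)) (hvanish i hi.1 (by omega))
    (hderiv i hi.1 (by omega))

end partialCall

theorem stmt_6_general (s₀ : ℝ) (hs₀ : 0 < s₀) (m : ℕ) (B : ℕ → ℝ) (hB0 : B 0 = s₀)
    (hBmono : ∀ j, j ≤ m → B j < B (j + 1))
    (b : ℕ → ℝ) (hb0 : b 0 = 1)
    (μ : Measure ℝ) (hμsupp : μ (Iic 0) = 0)
    (hμmean : (∫ y, y ∂μ) = s₀)
    (c : ℕ → ℝ → ℝ)
    (hc : ∀ j, 1 ≤ j → j ≤ m + 1 →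
      (∀ x : ℝ, 0 ≤ x → c j x ∈ Icc 0 s₀) ∧
      ConvexOn ℝ (Ici 0) (c j) ∧
      HasDerivWithinAt (c j) (-(b (j - 1))) (Ioi 0) 0 ∧
      c j 0 = b (j - 1) * B (j - 1) ∧
      HasDerivWithinAt (c j) (-(b j)) (Iio (B j)) (B j) ∧
      (∀ x : ℝ, B j ≤ x → c j x = 0) ∧
      (∀ x : ℝ, 0 ≤ x → b (j - 1) * max (B (j - 1) - x) 0 ≤ c j x))
    (hsum : ∀ x : ℝ, 0 ≤ x →
      (∑ j ∈ Finset.Icc 1 m, (c j x - b j * max (B j - x) 0)) + c (m + 1) x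
        = ∫ y, max (y - x) 0 ∂μ) :
    ∀ H : ℕ → ℝ → ℝ,
      (∀ j, 1 ≤ j → j ≤ m → ∀ x : ℝ,
        H j x = (∑ i ∈ Finset.Ico 1 j, (c i x - b i * max (B i - x) 0)) + c j x) →
      (∀ x : ℝ, H (m + 1) x = ∫ y, max (y - x) 0 ∂μ) →
      ∀ j, 1 ≤ j → j ≤ m →
        (∀ x : ℝ, 0 ≤ x → H j x ∈ Icc 0 s₀) ∧
        ConvexOn ℝ (Ici 0) (H j) ∧
        (∀ x : ℝ, 0 ≤ x → 0 ≤ H 1 x ∧ H j x ≤ H (j + 1) x) ∧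
        HasDerivWithinAt (H j) (-1) (Ioi 0) 0 ∧
        H j 0 = s₀ ∧
        (∀ x : ℝ, B j ≤ x → H j x = 0) ∧
        HasDerivWithinAt (H j) (-(b j)) (Iio (B j)) (B j) ∧
        ConvexOn ℝ (Ici 0) (fun x => H (j + 1) x - H j x + b j * max (B j - x) 0) := by
  intro H hH hHtop j hj1 hjm
  choose hc_range hc_conv hc_deriv0 hc_zero hc_derivB hc_vanish hc_lower using hc
  have hB : StrictMonoOn B (Iic (m + 1)) :=
    strictMonoOn_of_lt_add_one ordConnected_Iic fun k _ _ hk => hBmono k (by simpa using hk)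
  have hBpos : ∀ i, i ≤ m + 1 → 0 < B i := fun i hi =>
    (hB0 ▸ hs₀).trans_le (hB.monotoneOn (mem_Iic.2 (Nat.zero_le _)) (mem_Iic.2 hi) (Nat.zero_le i))
  have hHj : H j = partialCall c b B j := funext (hH j hj1 hjm)
  have hTop : ∀ x, 0 ≤ x → partialCall c b B (m + 1) x = ∫ y, max (y - x) 0 ∂μ := fun x hx => by
    rw [← hsum x hx, partialCall, Finset.Ico_add_one_right_eq_Icc]
  have hHsucc : EqOn (H (j + 1)) (partialCall c b B (j + 1)) (Ici 0) := fun x hx => by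
    rcases hjm.lt_or_eq with hjm | rfl
    · exact hH (j + 1) (by omega) hjm x
    · rw [hHtop, hTop x hx]
  have hle : ∀ x, 0 ≤ x → ∀ k l, 1 ≤ k → k ≤ l → l ≤ m + 1 →
      partialCall c b B k x ≤ partialCall c b B l x := fun x hx k l hk hkl hl =>
    monotoneOn_partialCall hc_lower hx ⟨hk, by omega⟩ ⟨by omega, hl⟩ hkl
  have hc1 : ∀ x, 0 ≤ x → 0 ≤ partialCall c b B 1 x := fun x hx =>
    (partialCall_one x).symm ▸ (hc_range 1 le_rfl (by omega) x hx).1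
  refine ⟨fun x hx => ⟨?_, ?_⟩, ?_, fun x hx => ⟨?_, ?_⟩, ?_, ?_, fun x hx => ?_, ?_, ?_⟩
  · exact hHj ▸ (hc1 x hx).trans (hle x hx 1 j le_rfl hj1 (by omega))
  · calc H j x ≤ partialCall c b B (m + 1) x := hHj ▸ hle x hx j (m + 1) hj1 (by omega) le_rfl
      _ = ∫ y, max (y - x) 0 ∂μ := hTop x hx
      _ ≤ s₀ := hμmean ▸ integral_max_sub_le_integral hμsupp
        (.of_integral_ne_zero (hμmean ▸ hs₀.ne')) hx
  · exact hHj ▸ convexOn_partialCall (fun i hi => (hBpos i (by omega)).le) hc_conv hc_vanish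
      hc_derivB hj1 (by omega)
  · exact hH 1 le_rfl (by omega) x ▸ hc1 x hx
  · rw [hHj, hHsucc hx]
    exact hle x hx j (j + 1) hj1 (by omega) (by omega)
  · simpa [hHj, hb0] using
      hasDerivWithinAt_partialCall_zero (fun i hi => hBpos i (by omega)) hc_deriv0 j hj1 (by omega)
  · rw [hHj, partialCall_apply_zero (fun i hi => (hBpos i (by omega)).le) hc_zero j hj1 (by omega),
      hb0, hB0, one_mul]
  · exact hHj ▸ partialCall_eq_zero_of_le hB.monotoneOn hc_vanish hj1 (by omega) hx
  · exact hHj ▸ hasDerivWithinAt_partialCall_Iio hB hc_vanish hc_derivB hj1 (by omega)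
  · refine (hc_conv (j + 1) (by omega) (by omega)).congr fun x hx => ?_
    rw [hHsucc hx, hHj, partialCall_succ hj1]
    ring

/-- From a decomposition `{c^{B_j}}` as in the multi-maturity theorem
(single maturity `l = 1`), the functions
`𝔠^{B_j}(x) = Σ_{i=1}^{j−1} (c^{B_i}(x) − b(B_i)·(B_i − x)⁺) + c^{B_j}(x)` (with
`𝔠^{B_{m+1}} := c_μ`) satisfy the conditions of the one-maturity characterization. -/
theorem stmt_6 (s₀ : ℝ) (hs₀ : 0 < s₀) (m : ℕ) (B : ℕ → ℝ) (hB0 : B 0 = s₀)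
    (hBmono : ∀ j, j ≤ m → B j < B (j + 1))
    (b : ℕ → ℝ) (hb0 : b 0 = 1) (hb : ∀ j, 1 ≤ j → j ≤ m + 1 → b j ∈ Icc (0:ℝ) 1)
    (μ : Measure ℝ) (hμ : IsProbabilityMeasure μ) (hμsupp : μ (Iic 0) = 0)
    (hμmean : (∫ y, y ∂μ) = s₀) (hμbdd : μ (Ioi (B (m + 1))) = 0)
    (hbtop : HasDerivWithinAt (fun x => ∫ y, max (y - x) 0 ∂μ) (-(b (m + 1)))
      (Iio (B (m + 1))) (B (m + 1)))
    (c : ℕ → ℝ → ℝ)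
    (hc : ∀ j, 1 ≤ j → j ≤ m + 1 →
      (∀ x : ℝ, 0 ≤ x → c j x ∈ Icc 0 s₀) ∧
      ConvexOn ℝ (Ici 0) (c j) ∧
      HasDerivWithinAt (c j) (-(b (j - 1))) (Ioi 0) 0 ∧
      c j 0 = b (j - 1) * B (j - 1) ∧
      HasDerivWithinAt (c j) (-(b j)) (Iio (B j)) (B j) ∧
      (∀ x : ℝ, B j ≤ x → c j x = 0) ∧
      (∀ x : ℝ, 0 ≤ x → b (j - 1) * max (B (j - 1) - x) 0 ≤ c j x))
    (hsum : ∀ x : ℝ, 0 ≤ x →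
      (∑ j ∈ Finset.Icc 1 m, (c j x - b j * max (B j - x) 0)) + c (m + 1) x
        = ∫ y, max (y - x) 0 ∂μ) :
    ∀ H : ℕ → ℝ → ℝ,
      (∀ j, 1 ≤ j → j ≤ m → ∀ x : ℝ,
        H j x = (∑ i ∈ Finset.Ico 1 j, (c i x - b i * max (B i - x) 0)) + c j x) →
      (∀ x : ℝ, H (m + 1) x = ∫ y, max (y - x) 0 ∂μ) →
      ∀ j, 1 ≤ j → j ≤ m →
        (∀ x : ℝ, 0 ≤ x → H j x ∈ Icc 0 s₀) ∧
        ConvexOn ℝ (Ici 0) (H j) ∧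
        (∀ x : ℝ, 0 ≤ x → 0 ≤ H 1 x ∧ H j x ≤ H (j + 1) x) ∧
        HasDerivWithinAt (H j) (-1) (Ioi 0) 0 ∧
        H j 0 = s₀ ∧
        (∀ x : ℝ, B j ≤ x → H j x = 0) ∧
        HasDerivWithinAt (H j) (-(b j)) (Iio (B j)) (B j) ∧
        ConvexOn ℝ (Ici 0) (fun x => H (j + 1) x - H j x + b j * max (B j - x) 0) :=
  stmt_6_general s₀ hs₀ m B hB0 hBmono b hb0 μ hμsupp hμmean c hc hsum
end

section
/- Let s₀ > 0, levels s₀ =: B₀ < B₁ < … < B_m < B_{m+1} < ∞, numbers b(B₁),…,b(B_m) ∈ [0,1] with b(B₀) := 1, and let c_μ be the call function of a probability measure μ on (0,∞) with mean s₀ such that μ((B_{m+1},∞)) = 0; set b(B_{m+1}) := −(left derivative of c_μ at B_{m+1}). Suppose 𝔠^{B₁},…,𝔠^{B_m} : [0,∞) → [0,s₀] satisfy, with 𝔠^{B_{m+1}} := c_μ, for every j = 1,…,m: 𝔠^{B_j} is convex; 0 ≤ 𝔠^{B₁} ≤ … ≤ 𝔠^{B_m} ≤ 𝔠^{B_{m+1}}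 pointwise; the right derivative of 𝔠^{B_j} at 0 equals −1, 𝔠^{B_j}(0) = s₀, and 𝔠^{B_j}(x) = 0 for x ≥ B_j; the left derivative of 𝔠^{B_j} at B_j equals −b(B_j); and x ↦ 𝔠^{B_{j+1}}(x) − 𝔠^{B_j}(x) + b(B_j)·(B_j − x)⁺ is convex on [0,∞). Define 𝔠^{B₀}(x) := (s₀ − x)⁺ and c^{B_j}(x) := 𝔠^{B_j}(x) − 𝔠^{B_{j−1}}(x) + b(B_{j−1})·(B_{j−1} − x)⁺ for j = 1,…,m+1. Then for every j = 1,…,m+1: c^{B_j} maps [0,∞) to [0,s₀] and is convex; the right derivative of c^{B_j} at 0 equals −b(B_{j−1}) and c^{B_j}(0) = b(B_{j−1})·B_{j−1}; the left derivative of c^{B_j} at B_j equals −b(B_j) and c^{B_j}(x) = 0 for all x ≥ B_j; b(B_{j−1})·(B_{j−1} − x)⁺ ≤ c^{B_j}(x) for all x ≥ 0; and Σ_{j=1}^{m} ( c^{B_j}(x) − b(B_j)·(B_j − x)⁺ ) + c^{B_{m+1}}(x) = c_μ(x) for all x ≥ 0. -/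
/-!
Every `𝔠^{B_j}`, including `𝔠^{B₀} = (s₀ - x)⁺` and `𝔠^{B_{m+1}} = c_μ`, is convex on `[0, ∞)`
with value `s₀` and right slope `-1` at `0`, vanishes on `[B_j, ∞)` and has left slope `-b(B_j)`
at `B_j`. By convexity the two slope conditions give the tangent bounds `(s₀ - x)⁺ ≤ 𝔠^{B_j}` and
`b(B_j) (B_j - x)⁺ ≤ 𝔠^{B_j}`. Every property of `c^{B_j}` then follows from
`𝔠^{B_{j-1}} ≤ 𝔠^{B_j}`, because `𝔠^{B_{j-1}}` and `(B_{j-1} - x)⁺` are affine near `0` and vanish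
near `B_j`; the sum telescopes to `𝔠^{B_{m+1}} = c_μ`.
-/

open MeasureTheory Set Filter Topology ProbabilityTheory

noncomputable section

def callFun (μ : Measure ℝ) (x : ℝ) : ℝ := ∫ y, max (y - x) 0 ∂μ

/-- The conditions on `𝔠^{B_j}`, with `a = B_j` and `β = b(B_j)`. -/
structure IsCallProfile (s₀ a β : ℝ) (f : ℝ → ℝ) : Prop where
  convexOn : ConvexOn ℝ (Ici 0) f
  mem_Icc : ∀ x, 0 ≤ x → f x ∈ Icc 0 s₀
  map_zero : f 0 = s₀
  hasDerivWithinAt_zero : HasDerivWithinAt f (-1) (Ioi 0) 0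
  eq_zero_of_le : ∀ x, a ≤ x → f x = 0
  hasDerivWithinAt_left : HasDerivWithinAt f (-β) (Iio a) a

lemma hasDerivWithinAt_posPart_sub_Iic {a x : ℝ} (hx : x ≤ a) :
    HasDerivWithinAt (fun y => max (a - y) 0) (-1) (Iic a) x := by
  have hlin : HasDerivWithinAt (fun y => a - y) (-1) (Iic a) x := by
    simpa using ((hasDerivAt_id x).const_sub a).hasDerivWithinAt
  exact hlin.congr_of_mem (fun y hy => max_eq_left (sub_nonneg.2 hy)) hx

lemma hasDerivAt_posPart_sub {a x : ℝ} (hx : x < a) :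
    HasDerivAt (fun y => max (a - y) 0) (-1) x :=
  (hasDerivWithinAt_posPart_sub_Iic hx.le).hasDerivAt (Iic_mem_nhds hx)

lemma isCallProfile_posPart_sub {s₀ : ℝ} (hs₀ : 0 < s₀) :
    IsCallProfile s₀ s₀ 1 (fun x => max (s₀ - x) 0) where
  convexOn :=
    ((convexOn_const s₀ (convex_Ici 0)).sub (concaveOn_id (convex_Ici 0))).sup
      (convexOn_const 0 (convex_Ici 0))
  mem_Icc x hx := ⟨le_max_right _ _, max_le (by linarith) hs₀.le⟩
  map_zero := by simp [hs₀.le]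
  hasDerivWithinAt_zero := (hasDerivAt_posPart_sub hs₀).hasDerivWithinAt
  eq_zero_of_le x hx := max_eq_right (sub_nonpos.2 hx)
  hasDerivWithinAt_left := (hasDerivWithinAt_posPart_sub_Iic le_rfl).mono Iio_subset_Iic_self

namespace IsCallProfile

variable {s₀ a β : ℝ} {f : ℝ → ℝ}

lemma posPart_sub_le (hf : IsCallProfile s₀ a β f) {x : ℝ} (hx : 0 ≤ x) :
    max (s₀ - x) 0 ≤ f x := by
  refine max_le ?_ (hf.mem_Icc x hx).1
  rcases hx.eq_or_lt with rfl | hx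
  · simp [hf.map_zero]
  · have hslope := hf.convexOn.le_slope_of_hasDerivWithinAt_Ioi (mem_Ici.2 le_rfl) hx.le hx
      hf.hasDerivWithinAt_zero
    rw [slope_def_field, hf.map_zero, sub_zero, le_div_iff₀ hx] at hslope
    linarith

lemma mul_posPart_sub_le (hf : IsCallProfile s₀ a β f) {x : ℝ} (hx : 0 ≤ x) :
    β * max (a - x) 0 ≤ f x := by
  rcases le_or_gt a x with hax | hxa
  · simpa [max_eq_right (sub_nonpos.2 hax)] using (hf.mem_Icc x hx).1
  · have hslope := hf.convexOn.slope_le_of_hasDerivWithinAt_Iio hx (hx.trans hxa.le) hxa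
      hf.hasDerivWithinAt_left
    rw [slope_def_field, hf.eq_zero_of_le a le_rfl, div_le_iff₀ (sub_pos.2 hxa)] at hslope
    rw [max_eq_left (sub_nonneg.2 hxa.le)]
    linarith

variable {a' β' : ℝ} {g : ℝ → ℝ}

lemma sub_add_mem_Icc (hf : IsCallProfile s₀ a β f) (hg : IsCallProfile s₀ a' β' g)
    (hβ : 0 ≤ β) {x : ℝ} (hx : 0 ≤ x) (hfg : f x ≤ g x) :
    g x - f x + β * max (a - x) 0 ∈ Icc 0 s₀ := by
  have hpos : 0 ≤ β * max (a - x) 0 := mul_nonneg hβ (le_max_right _ _)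
  have hle := hf.mul_posPart_sub_le hx
  have hg_le := (hg.mem_Icc x hx).2
  constructor <;> linarith

lemma sub_add_map_zero (hf : IsCallProfile s₀ a β f) (hg : IsCallProfile s₀ a' β' g)
    (ha : 0 ≤ a) : g 0 - f 0 + β * max (a - 0) 0 = β * a := by
  rw [hf.map_zero, hg.map_zero, sub_zero, max_eq_left ha]
  ring

lemma hasDerivWithinAt_sub_add_zero (hf : IsCallProfile s₀ a β f)
    (hg : IsCallProfile s₀ a' β' g) (ha : 0 < a) :
    HasDerivWithinAt (fun x => g x - f x + β * max (a - x) 0) (-β) (Ioi 0) 0 := by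
  have h := (hg.hasDerivWithinAt_zero.sub hf.hasDerivWithinAt_zero).add
    ((hasDerivAt_posPart_sub ha).hasDerivWithinAt.const_mul β)
  exact h.congr_deriv (by ring)

lemma hasDerivWithinAt_sub_add_left (hf : IsCallProfile s₀ a β f)
    (hg : IsCallProfile s₀ a' β' g) (haa' : a < a') :
    HasDerivWithinAt (fun x => g x - f x + β * max (a - x) 0) (-β') (Iio a') a' := by
  have heq : ∀ x, a ≤ x → g x - f x + β * max (a - x) 0 = g x := fun x hx => by
    rw [hf.eq_zero_of_le x hx, max_eq_right (sub_nonpos.2 hx)]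
    ring
  refine hg.hasDerivWithinAt_left.congr_of_eventuallyEq ?_ (heq a' haa'.le)
  filter_upwards [nhdsWithin_le_nhds (Ioi_mem_nhds haa')] with x hx using heq x (le_of_lt hx)

lemma sub_add_eq_zero (hf : IsCallProfile s₀ a β f) (hg : IsCallProfile s₀ a' β' g)
    (haa' : a ≤ a') {x : ℝ} (hx : a' ≤ x) : g x - f x + β * max (a - x) 0 = 0 := by
  rw [hf.eq_zero_of_le x (haa'.trans hx), hg.eq_zero_of_le x hx,
    max_eq_right (sub_nonpos.2 (haa'.trans hx))]
  ring

end IsCallProfile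

section callFun

variable {μ : Measure ℝ}

lemma callFun_nonneg (x : ℝ) : 0 ≤ callFun μ x :=
  integral_nonneg fun _ => le_max_right _ _

lemma integrable_posPart_sub [IsFiniteMeasure μ] (hμ : Integrable (fun y => y) μ) (x : ℝ) :
    Integrable (fun y => max (y - x) 0) μ :=
  (hμ.sub (integrable_const x)).pos_part

lemma antitone_callFun [IsFiniteMeasure μ] (hμ : Integrable (fun y => y) μ) :
    Antitone (callFun μ) := fun _ _ hxx' =>
  integral_mono (integrable_posPart_sub hμ _) (integrable_posPart_sub hμ _)
    fun _ => max_le_max (by linarith) le_rfl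

lemma convexOn_callFun [IsFiniteMeasure μ] (hμ : Integrable (fun y => y) μ) :
    ConvexOn ℝ univ (callFun μ) := by
  refine ⟨convex_univ, fun p _ q _ s t hs ht hst => ?_⟩
  have hp := (integrable_posPart_sub hμ p).const_mul s
  have hq := (integrable_posPart_sub hμ q).const_mul t
  calc callFun μ (s • p + t • q)
      ≤ ∫ y, (s * max (y - p) 0 + t * max (y - q) 0) ∂μ := by
        refine integral_mono (integrable_posPart_sub hμ _) (hp.add hq) fun y => max_le ?_ ?_
        · have hsplit : y - (s • p + t • q) = s * (y - p) + t * (y - q) := by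
            simp only [smul_eq_mul]
            linear_combination (-y) * hst
          rw [hsplit]
          gcongr <;> exact le_max_left _ _
        · positivity
    _ = s • callFun μ p + t • callFun μ q := by
        rw [integral_add hp hq, integral_const_mul, integral_const_mul]
        rfl

lemma callFun_zero (hμ0 : ∀ᵐ y ∂μ, 0 ≤ y) : callFun μ 0 = ∫ y, y ∂μ :=
  integral_congr_ae (hμ0.mono fun y hy => by simp [hy])

lemma callFun_eq_zero {T x : ℝ} (hμT : ∀ᵐ y ∂μ, y ≤ T) (hx : T ≤ x) : callFun μ x = 0 := by
  rw [callFun, integral_eq_zero_of_ae]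
  filter_upwards [hμT] with y hy using max_eq_right (by linarith)

lemma sub_le_callFun [IsProbabilityMeasure μ] (hμ : Integrable (fun y => y) μ) (x : ℝ) :
    (∫ y, y ∂μ) - x ≤ callFun μ x :=
  calc (∫ y, y ∂μ) - x = ∫ y, (y - x) ∂μ := by
        rw [integral_sub hμ (integrable_const x)]
        simp
    _ ≤ callFun μ x := integral_mono (hμ.sub (integrable_const x))
        (integrable_posPart_sub hμ x) fun _ => le_max_left _ _

lemma callFun_le_sub_add [IsProbabilityMeasure μ] (hμ : Integrable (fun y => y) μ)
    (hμ0 : ∀ᵐ y ∂μ, 0 ≤ y) (x : ℝ) :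
    callFun μ x ≤ (∫ y, y ∂μ) - x + x * μ.real (Iic x) := by
  have hind : Integrable ((Iic x).indicator fun _ => x) μ :=
    (integrable_const x).indicator measurableSet_Iic
  have hlin : Integrable (fun y => y - x) μ := hμ.sub (integrable_const x)
  calc callFun μ x ≤ ∫ y, (y - x + (Iic x).indicator (fun _ => x) y) ∂μ := by
        refine integral_mono_ae (integrable_posPart_sub hμ x) (hlin.add hind) ?_
        filter_upwards [hμ0] with y hy
        by_cases hyx : y ≤ x
        · rw [indicator_of_mem (show y ∈ Iic x from hyx)]
          exact max_le (by linarith) (by linarith)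
        · rw [indicator_of_notMem (show y ∉ Iic x from hyx)]
          exact max_le (by linarith) (by linarith)
    _ = (∫ y, y ∂μ) - x + x * μ.real (Iic x) := by
        rw [integral_add hlin hind, integral_sub hμ (integrable_const x),
          integral_indicator_const _ measurableSet_Iic]
        simp [mul_comm]

lemma hasDerivWithinAt_callFun_zero [IsProbabilityMeasure μ] (hμ : Integrable (fun y => y) μ)
    (hμ0 : μ (Iic 0) = 0) : HasDerivWithinAt (callFun μ) (-1) (Ioi 0) 0 := by
  have hnonneg : ∀ᵐ y ∂μ, 0 ≤ y :=
    (measure_eq_zero_iff_ae_notMem.1 hμ0).mono fun _ hy => (not_le.1 hy).le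
  have hcdf : Tendsto (fun x => μ.real (Iic x)) (𝓝[>] 0) (𝓝 0) := by
    have h := (((cdf μ).right_continuous 0).mono Ioi_subset_Ici_self).tendsto
    rw [cdf_eq_real, measureReal_def, hμ0, ENNReal.toReal_zero] at h
    exact h.congr fun x => cdf_eq_real μ x
  -- squeeze `-1 ≤ slope (callFun μ) 0 x ≤ -1 + μ.real (Iic x)` as `x → 0+`
  rw [hasDerivWithinAt_iff_tendsto_slope' self_notMem_Ioi]
  refine tendsto_of_tendsto_of_tendsto_of_le_of_le' tendsto_const_nhds
    (by simpa using hcdf.const_add (-1)) ?_ ?_ <;>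
    filter_upwards [self_mem_nhdsWithin] with x (hx : 0 < x) <;>
    rw [slope_def_field, callFun_zero hnonneg, sub_zero]
  · rw [le_div_iff₀ hx]
    linarith [sub_le_callFun hμ x]
  · rw [div_le_iff₀ hx]
    linarith [callFun_le_sub_add hμ hnonneg x]

lemma isCallProfile_callFun [IsProbabilityMeasure μ] {T β : ℝ}
    (hμ : Integrable (fun y => y) μ) (hμ0 : μ (Iic 0) = 0) (hμT : μ (Ioi T) = 0)
    (hβ : HasDerivWithinAt (callFun μ) (-β) (Iio T) T) :
    IsCallProfile (∫ y, y ∂μ) T β (callFun μ) := by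
  have hnonneg : ∀ᵐ y ∂μ, 0 ≤ y :=
    (measure_eq_zero_iff_ae_notMem.1 hμ0).mono fun _ hy => (not_le.1 hy).le
  have hle : ∀ᵐ y ∂μ, y ≤ T := (measure_eq_zero_iff_ae_notMem.1 hμT).mono fun _ hy => not_lt.1 hy
  exact
    { convexOn := (convexOn_callFun hμ).subset (subset_univ _) (convex_Ici 0)
      mem_Icc := fun x hx =>
        ⟨callFun_nonneg x, (antitone_callFun hμ hx).trans (callFun_zero hnonneg).le⟩
      map_zero := callFun_zero hnonneg
      hasDerivWithinAt_zero := hasDerivWithinAt_callFun_zero hμ hμ0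
      eq_zero_of_le := fun _ hx => callFun_eq_zero hle hx
      hasDerivWithinAt_left := hβ }

end callFun

lemma sum_Icc_telescope {G : Type*} [AddCommGroup G] (F g : ℕ → G) (m : ℕ) :
    ∑ j ∈ Finset.Icc 1 m, (F j - F (j - 1) + g (j - 1) - g j) + (F (m + 1) - F m + g m)
      = F (m + 1) - F 0 + g 0 := by
  induction m with
  | zero => simp
  | succ m ih =>
    rw [Finset.sum_Icc_succ_top (by omega), Nat.add_sub_cancel, eq_sub_of_add_eq ih]
    abel

lemma sum_Icc_sub_add_eq {G : Type*} [AddCommGroup G] {F g c : ℕ → G} {m : ℕ}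
    (hc : ∀ j, 1 ≤ j → j ≤ m + 1 → c j = F j - F (j - 1) + g (j - 1)) :
    ∑ j ∈ Finset.Icc 1 m, (c j - g j) + c (m + 1) = F (m + 1) - F 0 + g 0 := by
  rw [← sum_Icc_telescope F g m, hc (m + 1) (by omega) le_rfl, Nat.add_sub_cancel]
  congr 1
  refine Finset.sum_congr rfl fun j hj => ?_
  rw [hc j (Finset.mem_Icc.1 hj).1 (by linarith [(Finset.mem_Icc.1 hj).2])]

/-- From a decomposition `𝔠^{B₁},…,𝔠^{B_m}` as in the one-maturity
characterization (with `𝔠^{B₀}(x) := (s₀ − x)⁺` and `𝔠^{B_{m+1}} := c_μ`), the functions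
`c^{B_j}(x) = 𝔠^{B_j}(x) − 𝔠^{B_{j−1}}(x) + b(B_{j−1})·(B_{j−1} − x)⁺`, `j = 1,…,m+1`,
satisfy the conditions of the multi-maturity characterization for a single maturity. -/
theorem stmt_7 (s₀ : ℝ) (hs₀ : 0 < s₀) (m : ℕ) (B : ℕ → ℝ) (hB0 : B 0 = s₀)
    (hBmono : ∀ j, j ≤ m → B j < B (j + 1))
    (b : ℕ → ℝ) (hb0 : b 0 = 1) (hb : ∀ j, 1 ≤ j → j ≤ m → b j ∈ Icc (0:ℝ) 1)
    (μ : Measure ℝ) (hμ : IsProbabilityMeasure μ) (hμsupp : μ (Iic 0) = 0)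
    (hμmean : (∫ y, y ∂μ) = s₀) (hμbdd : μ (Ioi (B (m + 1))) = 0)
    (hbtop : HasDerivWithinAt (fun x => ∫ y, max (y - x) 0 ∂μ) (-(b (m + 1)))
      (Iio (B (m + 1))) (B (m + 1)))
    (𝔠 : ℕ → ℝ → ℝ)
    (h𝔠zero : ∀ x : ℝ, 𝔠 0 x = max (s₀ - x) 0)
    (h𝔠top : ∀ x : ℝ, 𝔠 (m + 1) x = ∫ y, max (y - x) 0 ∂μ)
    (h𝔠 : ∀ j, 1 ≤ j → j ≤ m →
      ConvexOn ℝ (Ici 0) (𝔠 j) ∧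
      (∀ x : ℝ, 0 ≤ x → 𝔠 j x ∈ Icc 0 s₀) ∧
      (∀ x : ℝ, 0 ≤ x → 0 ≤ 𝔠 1 x ∧ 𝔠 j x ≤ 𝔠 (j + 1) x) ∧
      HasDerivWithinAt (𝔠 j) (-1) (Ioi 0) 0 ∧
      𝔠 j 0 = s₀ ∧
      (∀ x : ℝ, B j ≤ x → 𝔠 j x = 0) ∧
      HasDerivWithinAt (𝔠 j) (-(b j)) (Iio (B j)) (B j) ∧
      ConvexOn ℝ (Ici 0) (fun x => 𝔠 (j + 1) x - 𝔠 j x + b j * max (B j - x) 0)) :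
    ∀ c : ℕ → ℝ → ℝ,
      (∀ j, 1 ≤ j → j ≤ m + 1 → ∀ x : ℝ,
        c j x = 𝔠 j x - 𝔠 (j - 1) x + b (j - 1) * max (B (j - 1) - x) 0) →
      (∀ j, 1 ≤ j → j ≤ m + 1 →
        (∀ x : ℝ, 0 ≤ x → c j x ∈ Icc 0 s₀) ∧
        ConvexOn ℝ (Ici 0) (c j) ∧
        HasDerivWithinAt (c j) (-(b (j - 1))) (Ioi 0) 0 ∧
        c j 0 = b (j - 1) * B (j - 1) ∧
        HasDerivWithinAt (c j) (-(b j)) (Iio (B j)) (B j) ∧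
        (∀ x : ℝ, B j ≤ x → c j x = 0) ∧
        (∀ x : ℝ, 0 ≤ x → b (j - 1) * max (B (j - 1) - x) 0 ≤ c j x)) ∧
      (∀ x : ℝ, 0 ≤ x →
        (∑ j ∈ Finset.Icc 1 m, (c j x - b j * max (B j - x) 0)) + c (m + 1) x
          = ∫ y, max (y - x) 0 ∂μ) := by
  intro c hc
  have hBpos : ∀ k ≤ m, 0 < B k := by
    intro k hk
    induction k with
    | zero => rwa [hB0]
    | succ k ih => exact (ih (by omega)).trans (hBmono k (by omega))
  have hbnn : ∀ k ≤ m, 0 ≤ b k := fun k hk => by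
    rcases k.eq_zero_or_pos with rfl | hk0
    · simp [hb0]
    · exact (hb k hk0 hk).1
  -- `∫ y ∂μ = s₀ ≠ 0` cannot be the junk value of a non-integrable integral
  have hint : Integrable (fun y => y) μ := .of_integral_ne_zero (hμmean ▸ hs₀.ne')
  have hprof : ∀ k ≤ m + 1, IsCallProfile s₀ (B k) (b k) (𝔠 k) := by
    intro k hk
    rcases k.eq_zero_or_pos with rfl | hk0
    · rw [hB0, hb0, funext h𝔠zero]
      exact isCallProfile_posPart_sub hs₀
    rcases hk.lt_or_eq with hkm | rfl
    · obtain ⟨hconv, hrange, -, hd0, h0, hvan, hdB, -⟩ := h𝔠 k hk0 (by omega)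
      exact ⟨hconv, hrange, h0, hd0, hvan, hdB⟩
    · rw [funext h𝔠top, ← hμmean]
      exact isCallProfile_callFun hint hμsupp hμbdd hbtop
  have hmono : ∀ k ≤ m, ∀ x, 0 ≤ x → 𝔠 k x ≤ 𝔠 (k + 1) x := by
    intro k hk x hx
    rcases k.eq_zero_or_pos with rfl | hk0
    · rw [h𝔠zero]
      exact (hprof 1 (by omega)).posPart_sub_le hx
    · exact ((h𝔠 k hk0 hk).2.2.1 x hx).2
  have hconv : ∀ k ≤ m,
      ConvexOn ℝ (Ici 0) (fun x => 𝔠 (k + 1) x - 𝔠 k x + b k * max (B k - x) 0) := by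
    intro k hk
    rcases k.eq_zero_or_pos with rfl | hk0
    · simpa [h𝔠zero, hb0, hB0] using (hprof 1 (by omega)).convexOn
    · exact (h𝔠 k hk0 hk).2.2.2.2.2.2.2
  refine ⟨fun j hj1 hj2 => ?_, fun x _ => ?_⟩
  · obtain ⟨k, rfl⟩ : ∃ k, j = k + 1 := ⟨j - 1, by omega⟩
    have hk : k ≤ m := by omega
    have hf := hprof k (by omega)
    have hg := hprof (k + 1) hj2
    rw [show c (k + 1) = fun x => 𝔠 (k + 1) x - 𝔠 k x + b k * max (B k - x) 0 from
      funext (hc (k + 1) hj1 hj2)]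
    simp only [Nat.add_sub_cancel]
    exact ⟨fun x hx => hf.sub_add_mem_Icc hg (hbnn k hk) hx (hmono k hk x hx), hconv k hk,
      hf.hasDerivWithinAt_sub_add_zero hg (hBpos k hk), hf.sub_add_map_zero hg (hBpos k hk).le,
      hf.hasDerivWithinAt_sub_add_left hg (hBmono k hk),
      fun x hx => hf.sub_add_eq_zero hg (hBmono k hk).le hx,
      fun x hx => le_add_of_nonneg_left (sub_nonneg.2 (hmono k hk x hx))⟩
  · rw [sum_Icc_sub_add_eq (F := fun k => 𝔠 k x) (g := fun k => b k * max (B k - x) 0)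
      fun j hj1 hj2 => hc j hj1 hj2 x, h𝔠top, h𝔠zero, hb0, hB0]
    ring
end
end
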